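/- arXiv:2110.15782 — 8 statements merged into one kernel-verified Lean document; each statement's English description precedes it below -/
import Mathlib

section
/- Let μ₁,…,μ_K be probability measures on measurable spaces (E₁,ℰ₁),…,(E_K,ℰ_K) and let (X₁ⁿ,…,X_Kⁿ), n=1,…,N, be i.i.d. samples from the product μ = μ₁×⋯×μ_K. For any bounded measurable φ on the product space, the product-form estimator μ_×^N(φ) := N^{-K} ∑_{n∈[N]^K} φ(X₁^{n₁},…,X_K^{n_K}) is an unbiased estimator of μ(φ), i.e. E[μ_×^N(φ)] = μ(φ). -/
open MeasureTheory ProbabilityTheory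

lemma map_pick {K N : ℕ} {E : Fin K → Type*} [∀ k, MeasurableSpace (E k)]
    (μ : ∀ k, Measure (E k)) [∀ k, IsProbabilityMeasure (μ k)]
    (n : Fin K → Fin N) :
    (Measure.pi (fun _ : Fin N => Measure.pi μ)).map (fun y k => y (n k) k)
      = Measure.pi μ := by
  have hg : Measurable (fun (y : Fin N → ∀ k, E k) k => y (n k) k) :=
    measurable_pi_lambda _ fun k => (measurable_pi_apply k).comp (measurable_pi_apply (n k))
  refine (Measure.pi_eq fun s hs => ?_).symm
  rw [Measure.map_apply hg (MeasurableSet.univ_pi hs)]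
  have hpre : (fun (y : Fin N → ∀ k, E k) k => y (n k) k) ⁻¹' Set.pi Set.univ s
      = Set.pi Set.univ (fun i => Set.pi Set.univ (fun k => if n k = i then s k else Set.univ)) := by
    ext y
    simp only [Set.mem_preimage, Set.mem_pi, Set.mem_univ, true_implies]
    constructor
    · intro h i k
      split_ifs with hik
      · exact hik ▸ h k
      · trivial
    · intro h k
      have := h (n k) k
      simpa using this
  rw [hpre, Measure.pi_pi]
  have : ∀ i, (Measure.pi μ) (Set.pi Set.univ (fun k => if n k = i then s k else Set.univ))
      = ∏ k, if n k = i then μ k (s k) else 1 := by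
    intro i
    rw [Measure.pi_pi]
    congr 1; ext k; split_ifs <;> simp
  simp_rw [this]
  rw [Finset.prod_comm]
  congr 1; ext k
  simp [Finset.prod_ite_eq]

/-- Unbiasedness of the product-form estimator: if `(X n)` are `N` i.i.d. samples from the
product measure `Measure.pi μ` of probability measures `μ k`, then the product-form estimator
`N^{-K} ∑_{n ∈ [N]^K} φ(X₁^{n₁},…,X_K^{n_K})` is unbiased for `∫ φ d(Measure.pi μ)`. -/
theorem stmt0
    {Ω : Type*} [MeasurableSpace Ω] (P : Measure Ω) [IsProbabilityMeasure P]
    {K : ℕ} {E : Fin K → Type*} [∀ k, MeasurableSpace (E k)]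
    (μ : ∀ k, Measure (E k)) [∀ k, IsProbabilityMeasure (μ k)]
    (N : ℕ) (hN : 0 < N)
    (X : Fin N → Ω → ∀ k, E k) (hXmeas : ∀ n, Measurable (X n))
    (hlaw : Measure.map (fun ω (n : Fin N) => X n ω) P
      = Measure.pi (fun _ : Fin N => Measure.pi μ))
    (φ : (∀ k, E k) → ℝ) (hφ : Measurable φ)
    (M : ℝ) (hbd : ∀ x, |φ x| ≤ M) :
    ∫ ω, ((N : ℝ) ^ K)⁻¹ * ∑ n : Fin K → Fin N, φ (fun k => X (n k) ω k) ∂P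
      = ∫ x, φ x ∂(Measure.pi μ) := by
  have hF : Measurable (fun ω (n : Fin N) => X n ω) :=
    measurable_pi_lambda _ fun n => hXmeas n
  have hg : ∀ n : Fin K → Fin N,
      Measurable (fun (y : Fin N → ∀ k, E k) k => y (n k) k) := fun n =>
    measurable_pi_lambda _ fun k => (measurable_pi_apply k).comp (measurable_pi_apply (n k))
  have hterm : ∀ n : Fin K → Fin N,
      ∫ ω, φ (fun k => X (n k) ω k) ∂P = ∫ x, φ x ∂(Measure.pi μ) := by
    intro n
    have hmap : P.map (fun ω k => X (n k) ω k) = Measure.pi μ := by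
      have : (fun ω k => X (n k) ω k)
          = (fun (y : Fin N → ∀ k, E k) k => y (n k) k) ∘ (fun ω (m : Fin N) => X m ω) := rfl
      rw [this, ← Measure.map_map (hg n) hF, hlaw, map_pick]
    rw [← hmap, integral_map ?_ hφ.aestronglyMeasurable]
    exact ((hg n).comp hF).aemeasurable
  have hint : ∀ n : Fin K → Fin N,
      Integrable (fun ω => φ (fun k => X (n k) ω k)) P := by
    intro n
    refine ⟨(hφ.comp ((hg n).comp hF)).aestronglyMeasurable, ?_⟩
    exact HasFiniteIntegral.of_bounded (C := M) (ae_of_all _ fun ω => hbd _)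
  rw [integral_const_mul, integral_finset_sum _ fun n _ => hint n]
  simp_rw [hterm]
  rw [Finset.sum_const, Finset.card_univ, Fintype.card_fun, Fintype.card_fin, Fintype.card_fin,
    nsmul_eq_mul, ← mul_assoc, Nat.cast_pow, inv_mul_cancel₀, one_mul]
  positivity
end

section
/- Let μ₁,…,μ_K be probability measures, X₁ⁿ,…,X_Kⁿ (n ≤ N) i.i.d. draws from the product μ = μ₁×⋯×μ_K, and φ a square μ-integrable function. Then the variance of the product-form estimator μ_×^N(φ) = N^{-K} ∑_{n∈[N]^K} φ(X^n) is bounded above by the variance of the standard Monte Carlo estimator μ^N(φ) = N^{-1} ∑_{n=1}^N φ(X₁ⁿ,…,X_Kⁿ), for every N > 0. -/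
/-! Shifting the samples cyclically in each coordinate, `a n k ↦ a (n + v k) k` for
`v : Fin K → Fin N`, preserves the joint law of `N` i.i.d. draws from a product measure, and
averaging the standard estimator over all `N ^ K` such shifts gives exactly the product-form
estimator. A variance of an average is at most the average of the variances
(`2 cov[X, Y] ≤ Var[X] + Var[Y]`), and all the shifted standard estimators have the same
variance. -/

open MeasureTheory ProbabilityTheory Finset

section VarianceAverage

variable {Ω ι : Type*} [MeasurableSpace Ω] {μ : Measure Ω} [IsFiniteMeasure μ]

lemma two_mul_covariance_le_variance_add {X Y : Ω → ℝ} (hX : MemLp X 2 μ) (hY : MemLp Y 2 μ) :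
    2 * cov[X, Y; μ] ≤ Var[X; μ] + Var[Y; μ] := by
  have := variance_nonneg (X - Y) μ
  rw [variance_sub hX hY] at this
  linarith

lemma variance_average_le (s : Finset ι) {X : ι → Ω → ℝ} (hX : ∀ i ∈ s, MemLp (X i) 2 μ) :
    Var[fun ω ↦ (#s : ℝ)⁻¹ * ∑ i ∈ s, X i ω; μ] ≤ (#s : ℝ)⁻¹ * ∑ i ∈ s, Var[X i; μ] := by
  have hcov : ∑ i ∈ s, ∑ j ∈ s, cov[X i, X j; μ] ≤ #s * ∑ i ∈ s, Var[X i; μ] :=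
    calc ∑ i ∈ s, ∑ j ∈ s, cov[X i, X j; μ]
        ≤ ∑ i ∈ s, ∑ j ∈ s, (Var[X i; μ] + Var[X j; μ]) / 2 := by
          gcongr with i hi j hj
          linarith [two_mul_covariance_le_variance_add (hX i hi) (hX j hj)]
      _ = #s * ∑ i ∈ s, Var[X i; μ] := by
          simp only [add_div, sum_add_distrib, sum_const, nsmul_eq_mul, ← mul_sum, ← sum_div]
          ring
  rw [variance_const_mul, variance_fun_sum' hX]
  rcases s.eq_empty_or_nonempty with rfl | hs
  · simp
  · calc ((#s : ℝ)⁻¹) ^ 2 * ∑ i ∈ s, ∑ j ∈ s, cov[X i, X j; μ]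
        ≤ ((#s : ℝ)⁻¹) ^ 2 * (#s * ∑ i ∈ s, Var[X i; μ]) := by gcongr
      _ = (#s : ℝ)⁻¹ * ∑ i ∈ s, Var[X i; μ] := by
          have : (#s : ℝ) ≠ 0 := by exact_mod_cast hs.card_ne_zero
          field_simp

end VarianceAverage

theorem measurePreserving_permute_pi_pi {ι κ : Type*} [Fintype ι] [Fintype κ] {E : κ → Type*}
    [∀ k, MeasurableSpace (E k)] (μ : ∀ k, Measure (E k)) [∀ k, IsFiniteMeasure (μ k)]
    (σ : κ → Equiv.Perm ι) :
    MeasurePreserving (fun (a : ι → ∀ k, E k) i k ↦ a (σ k i) k)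
      (Measure.pi fun _ : ι ↦ Measure.pi μ) (Measure.pi fun _ : ι ↦ Measure.pi μ) := by
  have hmeas : Measurable fun (a : ι → ∀ k, E k) i k ↦ a (σ k i) k := by fun_prop
  -- It suffices to compare both measures on boxes whose sides are themselves boxes.
  refine ⟨hmeas, (Measure.pi_eq_generateFrom (fun _ ↦ generateFrom_pi) (fun _ ↦ isPiSystem_pi)
    (fun _ ↦ (Measure.FiniteSpanningSetsIn.pi fun k ↦ (μ k).toFiniteSpanningSetsIn)) ?_).symm⟩
  rintro s hs
  choose t ht hts using hs
  obtain rfl : s = fun i ↦ Set.univ.pi (t i) := funext fun i ↦ (hts i).symm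
  have hpre : (fun (a : ι → ∀ k, E k) i k ↦ a (σ k i) k) ⁻¹'
      Set.univ.pi (fun i ↦ Set.univ.pi (t i))
        = Set.univ.pi fun j ↦ Set.univ.pi fun k ↦ t ((σ k).symm j) k := by
    ext a
    simp only [Set.mem_preimage, Set.mem_univ_pi]
    exact ⟨fun h j k ↦ by simpa using h ((σ k).symm j) k,
      fun h i k ↦ by simpa using h (σ k i) k⟩
  rw [Measure.map_apply hmeas (.univ_pi fun i ↦ .univ_pi fun k ↦ ht i k (Set.mem_univ k)), hpre]
  simp only [Measure.pi_pi]
  rw [prod_comm]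
  simp only [fun k ↦ (σ k).symm.prod_comp (fun i ↦ μ k (t i k))]
  exact prod_comm

section Estimators

variable {K : ℕ} {E : Fin K → Type*} (N : ℕ) (φ : (∀ k, E k) → ℝ)

noncomputable def monteCarloEstimator (a : Fin N → ∀ k, E k) : ℝ :=
  (N : ℝ)⁻¹ * ∑ n, φ (a n)

noncomputable def productFormEstimator (a : Fin N → ∀ k, E k) : ℝ :=
  ((N : ℝ) ^ K)⁻¹ * ∑ m : Fin K → Fin N, φ (fun k ↦ a (m k) k)

variable {N φ}

lemma sum_monteCarloEstimator_shift [NeZero N] (a : Fin N → ∀ k, E k) :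
    ∑ v : Fin K → Fin N, monteCarloEstimator N φ (fun n k ↦ a (n + v k) k)
      = ∑ m : Fin K → Fin N, φ (fun k ↦ a (m k) k) := by
  have hN : (N : ℝ) ≠ 0 := NeZero.ne _
  have hshift (n : Fin N) : ∑ v : Fin K → Fin N, φ (fun k ↦ a (n + v k) k)
      = ∑ m : Fin K → Fin N, φ (fun k ↦ a (m k) k) :=
    Fintype.sum_equiv (Equiv.piCongrRight fun _ ↦ Equiv.addLeft n) _ _ fun _ ↦ rfl
  simp only [monteCarloEstimator, ← mul_sum]
  rw [sum_comm]
  simp only [hshift, sum_const, card_univ, Fintype.card_fin, nsmul_eq_mul]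
  field_simp

lemma productFormEstimator_eq_average_shift [NeZero N] (a : Fin N → ∀ k, E k) :
    productFormEstimator N φ a = (#(univ : Finset (Fin K → Fin N)) : ℝ)⁻¹ *
      ∑ v : Fin K → Fin N, monteCarloEstimator N φ (fun n k ↦ a (n + v k) k) := by
  rw [sum_monteCarloEstimator_shift, card_univ, Fintype.card_fun, Fintype.card_fin,
    Fintype.card_fin, Nat.cast_pow, productFormEstimator]

variable [∀ k, MeasurableSpace (E k)]

lemma measurable_monteCarloEstimator (hφ : Measurable φ) :
    Measurable (monteCarloEstimator (E := E) N φ) := by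
  unfold monteCarloEstimator; fun_prop

lemma measurable_productFormEstimator (hφ : Measurable φ) :
    Measurable (productFormEstimator (E := E) N φ) := by
  unfold productFormEstimator; fun_prop

variable (μ : ∀ k, Measure (E k)) [∀ k, IsProbabilityMeasure (μ k)]

lemma memLp_monteCarloEstimator (hφ : MemLp φ 2 (Measure.pi μ)) :
    MemLp (monteCarloEstimator N φ) 2 (Measure.pi fun _ : Fin N ↦ Measure.pi μ) :=
  (memLp_finsetSum _ fun n _ ↦
    hφ.comp_measurePreserving (measurePreserving_eval _ n)).const_mul _

theorem variance_productFormEstimator_le [NeZero N] (hφ : MemLp φ 2 (Measure.pi μ)) :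
    Var[productFormEstimator N φ; Measure.pi fun _ : Fin N ↦ Measure.pi μ]
      ≤ Var[monteCarloEstimator N φ; Measure.pi fun _ : Fin N ↦ Measure.pi μ] := by
  have hshift (v : Fin K → Fin N) :
      MeasurePreserving (fun (a : Fin N → ∀ k, E k) n k ↦ a (n + v k) k)
      (Measure.pi fun _ ↦ Measure.pi μ) (Measure.pi fun _ ↦ Measure.pi μ) :=
    measurePreserving_permute_pi_pi μ fun k ↦ Equiv.addRight (v k)
  have hZ := memLp_monteCarloEstimator (N := N) μ hφ
  calc Var[productFormEstimator N φ; Measure.pi fun _ : Fin N ↦ Measure.pi μ]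
      ≤ (#(univ : Finset (Fin K → Fin N)) : ℝ)⁻¹ * ∑ v : Fin K → Fin N,
          Var[fun a ↦ monteCarloEstimator N φ (fun n k ↦ a (n + v k) k);
            Measure.pi fun _ : Fin N ↦ Measure.pi μ] := by
        rw [funext (productFormEstimator_eq_average_shift (N := N) (φ := φ))]
        exact variance_average_le _ fun v _ ↦ hZ.comp_measurePreserving (hshift v)
    _ = Var[monteCarloEstimator N φ; Measure.pi fun _ : Fin N ↦ Measure.pi μ] := by
        simp only [fun v ↦ (hshift v).variance_fun_comp hZ.aemeasurable, sum_const, nsmul_eq_mul]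
        rw [inv_mul_cancel_left₀ (by simp [NeZero.ne N])]

end Estimators

/-- Variance domination of the product-form estimator: with `N` i.i.d. samples from the product
`μ = μ₁ × ⋯ × μ_K` and `φ` square-integrable w.r.t. `μ`, the variance of the product-form
estimator `μ_×^N(φ)` is at most the variance of the standard Monte Carlo estimator `μ^N(φ)`. -/
theorem stmt1
    {Ω : Type*} [MeasurableSpace Ω] (P : Measure Ω) [IsProbabilityMeasure P]
    {K : ℕ} {E : Fin K → Type*} [∀ k, MeasurableSpace (E k)]
    (μ : ∀ k, Measure (E k)) [∀ k, IsProbabilityMeasure (μ k)]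
    (N : ℕ) (hN : 0 < N)
    (X : Fin N → Ω → ∀ k, E k) (hXmeas : ∀ n, Measurable (X n))
    (hlaw : Measure.map (fun ω (n : Fin N) => X n ω) P
      = Measure.pi (fun _ : Fin N => Measure.pi μ))
    (φ : (∀ k, E k) → ℝ) (hφ : Measurable φ)
    (hL2 : MemLp φ 2 (Measure.pi μ)) :
    variance (fun ω => ((N : ℝ) ^ K)⁻¹ * ∑ n : Fin K → Fin N, φ (fun k => X (n k) ω k)) P
      ≤ variance (fun ω => (N : ℝ)⁻¹ * ∑ n : Fin N, φ (X n ω)) P := by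
  have : NeZero N := ⟨hN.ne'⟩
  have hsample : MeasurePreserving (fun ω n ↦ X n ω) P
      (Measure.pi fun _ : Fin N ↦ Measure.pi μ) := ⟨measurable_pi_lambda _ hXmeas, hlaw⟩
  calc Var[fun ω ↦ productFormEstimator N φ fun n ↦ X n ω; P]
      = Var[productFormEstimator N φ; Measure.pi fun _ : Fin N ↦ Measure.pi μ] :=
        hsample.variance_fun_comp (measurable_productFormEstimator hφ).aemeasurable
    _ ≤ Var[monteCarloEstimator N φ; Measure.pi fun _ : Fin N ↦ Measure.pi μ] :=
        variance_productFormEstimator_le μ hL2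
    _ = Var[fun ω ↦ monteCarloEstimator N φ fun n ↦ X n ω; P] :=
        (hsample.variance_fun_comp (measurable_monteCarloEstimator hφ).aemeasurable).symm
end

section
/- Let (η₁^N)_{N≥1} and (η₂^N)_{N≥1} be independent sequences of random probability measures on measurable spaces (S₁,𝒮₁) and (S₂,𝒮₂) respectively, with deterministic probability-measure limits η₁, η₂, and suppose that for some p ≥ 1 there is a constant C with E[|η_k^N(φ) − η_k(φ)|^p]^{1/p} ≤ C‖φ‖/√N for all N > 0, all bounded measurable φ on S_k, and k = 1,2. Then there is a constant C' such that E[|(η₁^N × η₂^N)(φ) − (η₁ × η₂)(φ)|^p]^{1/p} ≤ C'‖φ‖/√N for all N > 0 and all bounded measurable φ on S₁ × S₂. -/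
/-!
Split `(η₁^N × η₂^N)(φ) − (η₁ × η₂)(φ)` at `∫ η₂(φ(x, ·)) dη₁^N(x)`. The second piece is
`(η₁^N − η₁)(g)` with `g x = η₂(φ(x, ·))`, controlled by the hypothesis on `η₁^N`. The first
piece is `∫ (η₂^N − η₂)(φ(x, ·)) dη₁^N(x)`; by Jensen its `p`-th power is at most
`∫ |(η₂^N − η₂)(φ(x, ·))|^p dη₁^N(x)`, and by independence the expectation of that is an average
over the law of `η₁^N` of `∫ E|(η₂^N − η₂)(φ(x, ·))|^p dμ(x)`, which the hypothesis on `η₂^N`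
bounds for each fixed `x`. Minkowski's inequality then gives `C' = 2C`.
-/

open MeasureTheory ProbabilityTheory

section

variable {Ω α β S S₁ S₂ : Type*} [MeasurableSpace Ω] [MeasurableSpace α] [MeasurableSpace β]
  [MeasurableSpace S] [MeasurableSpace S₁] [MeasurableSpace S₂]

theorem Measurable.integral_probabilityMeasure {κ : α → ProbabilityMeasure S} (hκ : Measurable κ)
    {f : α × S → ℝ} (hf : Measurable f) :
    Measurable fun a => ∫ x, f (a, x) ∂(κ a : Measure S) := by
  let K : Kernel α S := ⟨fun a => κ a, measurable_subtype_coe.comp hκ⟩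
  have : IsMarkovKernel K := ⟨fun a => (κ a).prop⟩
  exact (hf.stronglyMeasurable.integral_kernel_prod_right' (κ := K)).measurable

theorem abs_integral_le_of_abs_le (μ : Measure S) [IsProbabilityMeasure μ] {f : S → ℝ} {M : ℝ}
    (hM : ∀ x, |f x| ≤ M) : |∫ x, f x ∂μ| ≤ M := by
  simpa using norm_integral_le_of_norm_le_const (μ := μ) (f := f) (.of_forall hM)

theorem MeasureTheory.Integrable.of_abs_le {μ : Measure S} [IsFiniteMeasure μ] {f : S → ℝ}
    (hf : Measurable f) {M : ℝ} (hM : ∀ x, |f x| ≤ M) : Integrable f μ :=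
  .of_bound (f := f) hf.aestronglyMeasurable M (.of_forall hM)

theorem abs_abs_rpow_le_rpow {a M p : ℝ} (hp : 0 ≤ p) (h : |a| ≤ M) : |(|a| ^ p)| ≤ M ^ p := by
  rw [abs_of_nonneg (by positivity)]
  exact Real.rpow_le_rpow (abs_nonneg a) h hp

theorem abs_integral_sub_integral_le (μ ν : Measure S) [IsProbabilityMeasure μ]
    [IsProbabilityMeasure ν] {f : S → ℝ} {M : ℝ} (hM : ∀ x, |f x| ≤ M) :
    |∫ x, f x ∂μ - ∫ x, f x ∂ν| ≤ 2 * M :=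
  (abs_sub _ _).trans <| by
    linarith [abs_integral_le_of_abs_le μ hM, abs_integral_le_of_abs_le ν hM]

theorem abs_integral_rpow_le_integral_abs_rpow (μ : Measure S) [IsProbabilityMeasure μ] {p : ℝ}
    (hp : 1 ≤ p) {f : S → ℝ} (hf : Measurable f) {M : ℝ} (hM : ∀ x, |f x| ≤ M) :
    |∫ x, f x ∂μ| ^ p ≤ ∫ x, |f x| ^ p ∂μ :=
  calc |∫ x, f x ∂μ| ^ p ≤ (∫ x, |f x| ∂μ) ^ p := by
        gcongr; exact abs_integral_le_integral_abs
    _ ≤ ∫ x, |f x| ^ p ∂μ :=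
        (convexOn_rpow hp).map_integral_le (Real.continuous_rpow_const (by linarith)).continuousOn
          isClosed_Ici (.of_forall fun x => abs_nonneg (f x)) (Integrable.of_abs_le hf hM).abs
          (.of_abs_le (hf.abs.pow_const p) fun x => abs_abs_rpow_le_rpow (by linarith) (hM x))

theorem integral_integral_le_of_forall_integral_le {μ : Measure S} [IsProbabilityMeasure μ]
    {ν : Measure β} [SFinite ν] {F : S → β → ℝ} (hF : Integrable (Function.uncurry F) (μ.prod ν))
    {B : ℝ} (hB : ∀ x, ∫ y, F x y ∂ν ≤ B) : ∫ y, ∫ x, F x y ∂μ ∂ν ≤ B := by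
  rw [← integral_integral_swap hF]
  calc ∫ x, ∫ y, F x y ∂ν ∂μ ≤ ∫ _, B ∂μ :=
        integral_mono hF.integral_prod_left (integrable_const B) hB
    _ = B := by simp

theorem ProbabilityTheory.IndepFun.subtype_mk {P : Measure Ω} {f : Ω → α} {g : Ω → β}
    {p : α → Prop} {q : β → Prop} (h : IndepFun f g P) (hf : ∀ ω, p (f ω)) (hg : ∀ ω, q (g ω)) :
    IndepFun (fun ω => (⟨f ω, hf ω⟩ : Subtype p)) (fun ω => (⟨g ω, hg ω⟩ : Subtype q)) P := by
  simp only [IndepFun, Kernel.IndepFun, Subtype.instMeasurableSpace, MeasurableSpace.comap_comp]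
  exact h

theorem ProbabilityTheory.IndepFun.integral_comp_le_of_forall_integral_le {P : Measure Ω}
    [IsProbabilityMeasure P] {X : Ω → α} {Y : Ω → β} (hXY : IndepFun X Y P) (hX : Measurable X)
    (hY : Measurable Y) {h : α × β → ℝ} (hh : Measurable h)
    (hint : Integrable h ((P.map X).prod (P.map Y))) {B : ℝ}
    (hB : ∀ a, ∫ ω, h (a, Y ω) ∂P ≤ B) :
    ∫ ω, h (X ω, Y ω) ∂P ≤ B := by
  have : IsProbabilityMeasure (P.map X) := Measure.isProbabilityMeasure_map hX.aemeasurable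
  rw [← integral_map (hX.prodMk hY).aemeasurable hh.aestronglyMeasurable,
    (indepFun_iff_map_prod_eq_prod_map_map hX.aemeasurable hY.aemeasurable).1 hXY,
    integral_prod _ hint]
  calc ∫ a, ∫ b, h (a, b) ∂(P.map Y) ∂(P.map X) ≤ ∫ _, B ∂(P.map X) :=
        integral_mono hint.integral_prod_left (integrable_const B) fun a =>
          (integral_map hY.aemeasurable
            (hh.comp measurable_prodMk_left).aestronglyMeasurable).trans_le (hB a)
    _ = B := by simp

theorem integral_abs_sub_rpow_rpow_le_add {μ : Measure α} {p : ℝ} (hp : 1 ≤ p) {f g h : α → ℝ}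
    (hfg : MemLp (fun x => f x - g x) (ENNReal.ofReal p) μ)
    (hgh : AEStronglyMeasurable (fun x => g x - h x) μ) :
    (∫ x, |f x - h x| ^ p ∂μ) ^ (1 / p)
      ≤ (∫ x, |f x - g x| ^ p ∂μ) ^ (1 / p) + (∫ x, |g x - h x| ^ p ∂μ) ^ (1 / p) := by
  have lpNorm_eq {u : α → ℝ} (hu : AEStronglyMeasurable u μ) :
      lpNorm u (ENNReal.ofReal p) μ = (∫ x, |u x| ^ p ∂μ) ^ (1 / p) := by
    rw [lpNorm_eq_integral_norm_rpow_toReal (by simp; linarith) ENNReal.ofReal_ne_top hu,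
      ENNReal.toReal_ofReal (by linarith), one_div]
    rfl
  rw [← lpNorm_eq hfg.aestronglyMeasurable, ← lpNorm_eq hgh]
  calc (∫ x, |f x - h x| ^ p ∂μ) ^ (1 / p)
      _ = lpNorm ((fun x => f x - g x) + fun x => g x - h x) (ENNReal.ofReal p) μ := by
        rw [lpNorm_eq (hfg.aestronglyMeasurable.add hgh)]
        simp only [Pi.add_apply, sub_add_sub_cancel]
      _ ≤ _ := lpNorm_add_le hfg (ENNReal.one_le_ofReal.2 hp)

theorem Measurable.integral_integral_probabilityMeasure {X : α → ProbabilityMeasure S₁}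
    {Y : α → ProbabilityMeasure S₂} (hX : Measurable X) (hY : Measurable Y)
    {ψ : S₁ × S₂ → ℝ} (hψ : Measurable ψ) :
    Measurable fun a => ∫ x, ∫ y, ψ (x, y) ∂(Y a : Measure S₂) ∂(X a : Measure S₁) :=
  hX.integral_probabilityMeasure <| (hY.comp measurable_fst).integral_probabilityMeasure <|
    hψ.comp ((measurable_snd.comp measurable_fst).prodMk measurable_snd)

theorem memLp_integral_integral_sub_integral_integral {P : Measure Ω} [IsFiniteMeasure P]
    {X : Ω → ProbabilityMeasure S₁} {Y Z : Ω → ProbabilityMeasure S₂} (hX : Measurable X)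
    (hY : Measurable Y) (hZ : Measurable Z) {ψ : S₁ × S₂ → ℝ} (hψ : Measurable ψ) {M : ℝ}
    (hM : ∀ z, |ψ z| ≤ M) (q : ENNReal) :
    MemLp (fun ω => ∫ x, ∫ y, ψ (x, y) ∂(Y ω : Measure S₂) ∂(X ω : Measure S₁)
      - ∫ x, ∫ y, ψ (x, y) ∂(Z ω : Measure S₂) ∂(X ω : Measure S₁)) q P := by
  have hψM (μ : ProbabilityMeasure S₁) (ν : ProbabilityMeasure S₂) :
      |∫ x, ∫ y, ψ (x, y) ∂(ν : Measure S₂) ∂(μ : Measure S₁)| ≤ M :=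
    abs_integral_le_of_abs_le _ fun x => abs_integral_le_of_abs_le _ fun y => hM (x, y)
  refine .of_bound ((hX.integral_integral_probabilityMeasure hY hψ).sub
    (hX.integral_integral_probabilityMeasure hZ hψ)).aestronglyMeasurable (2 * M)
    (.of_forall fun ω => (abs_sub _ _).trans ?_)
  linarith [hψM (X ω) (Y ω), hψM (X ω) (Z ω)]

theorem abs_integral_integral_sub_rpow_le (μ : Measure S₁) [IsProbabilityMeasure μ]
    (ν₁ ν₂ : Measure S₂) [IsProbabilityMeasure ν₁] [IsProbabilityMeasure ν₂] {p : ℝ} (hp : 1 ≤ p)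
    {ψ : S₁ × S₂ → ℝ} (hψ : Measurable ψ) {M : ℝ} (hM : ∀ z, |ψ z| ≤ M) :
    |∫ x, ∫ y, ψ (x, y) ∂ν₁ ∂μ - ∫ x, ∫ y, ψ (x, y) ∂ν₂ ∂μ| ^ p
      ≤ ∫ x, |∫ y, ψ (x, y) ∂ν₁ - ∫ y, ψ (x, y) ∂ν₂| ^ p ∂μ := by
  have hψν (ν : Measure S₂) [IsProbabilityMeasure ν] : Measurable fun x => ∫ y, ψ (x, y) ∂ν :=
    hψ.stronglyMeasurable.integral_prod_right'.measurable
  have hψν_int (ν : Measure S₂) [IsProbabilityMeasure ν] :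
      Integrable (fun x => ∫ y, ψ (x, y) ∂ν) μ :=
    .of_abs_le (hψν ν) fun x => abs_integral_le_of_abs_le ν fun y => hM (x, y)
  rw [← integral_sub (hψν_int ν₁) (hψν_int ν₂)]
  exact abs_integral_rpow_le_integral_abs_rpow μ hp ((hψν ν₁).sub (hψν ν₂))
    fun x => abs_integral_sub_integral_le ν₁ ν₂ fun y => hM (x, y)

theorem integral_abs_integral_sub_rpow_le_of_indepFun {P : Measure Ω} [IsProbabilityMeasure P]
    {X : Ω → ProbabilityMeasure S₁} {Y : Ω → ProbabilityMeasure S₂} (hX : Measurable X)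
    (hY : Measurable Y) (hXY : IndepFun X Y P) (ν : Measure S₂) [IsProbabilityMeasure ν]
    {p : ℝ} (hp : 1 ≤ p)
    {ψ : S₁ × S₂ → ℝ} (hψ : Measurable ψ) {M : ℝ} (hM : ∀ z, |ψ z| ≤ M) {B : ℝ}
    (hB : ∀ x, ∫ ω, |∫ y, ψ (x, y) ∂(Y ω : Measure S₂) - ∫ y, ψ (x, y) ∂ν| ^ p ∂P ≤ B) :
    ∫ ω, |∫ x, ∫ y, ψ (x, y) ∂(Y ω : Measure S₂) ∂(X ω : Measure S₁)
        - ∫ x, ∫ y, ψ (x, y) ∂ν ∂(X ω : Measure S₁)| ^ p ∂P ≤ B := by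
  set d : S₁ × ProbabilityMeasure S₂ → ℝ :=
    fun z => ∫ y, ψ (z.1, y) ∂(z.2 : Measure S₂) - ∫ y, ψ (z.1, y) ∂ν
  have hd : Measurable d :=
    (measurable_snd.integral_probabilityMeasure
      (hψ.comp ((measurable_fst.comp measurable_fst).prodMk measurable_snd))).sub
      (hψ.stronglyMeasurable.integral_prod_right'.measurable.comp measurable_fst)
  have hdpM (z) : |(|d z| ^ p)| ≤ (2 * M) ^ p :=
    abs_abs_rpow_le_rpow (by linarith) (abs_integral_sub_integral_le _ ν fun y => hM (z.1, y))
  set H : ProbabilityMeasure S₁ × ProbabilityMeasure S₂ → ℝ :=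
    fun q => ∫ x, |d (x, q.2)| ^ p ∂(q.1 : Measure S₁)
  have hH : Measurable H := measurable_fst.integral_probabilityMeasure
    ((hd.comp (measurable_snd.prodMk (measurable_snd.comp measurable_fst))).abs.pow_const p)
  have hHM (q) : |H q| ≤ (2 * M) ^ p := abs_integral_le_of_abs_le _ fun x => hdpM (x, q.2)
  have average (μ : ProbabilityMeasure S₁) : ∫ ω, H (μ, Y ω) ∂P ≤ B :=
    integral_integral_le_of_forall_integral_le (μ := (μ : Measure S₁))
      (.of_abs_le ((hd.comp (measurable_fst.prodMk (hY.comp measurable_snd))).abs.pow_const p)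
        fun z => hdpM (z.1, Y z.2)) hB
  calc _ ≤ ∫ ω, H (X ω, Y ω) ∂P :=
        integral_mono_of_nonneg (.of_forall fun ω => by positivity)
          (.of_abs_le (hH.comp (hX.prodMk hY)) fun ω => hHM _)
          (.of_forall fun ω => abs_integral_integral_sub_rpow_le _ _ ν hp hψ hM)
    _ ≤ B := hXY.integral_comp_le_of_forall_integral_le hX hY hH (.of_abs_le hH hHM) average

end

theorem stmt3_general
    {Ω : Type*} [MeasurableSpace Ω] (P : Measure Ω) [IsProbabilityMeasure P]
    {S₁ S₂ : Type*} [MeasurableSpace S₁] [MeasurableSpace S₂]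
    (η₁ : ℕ → Ω → Measure S₁) (η₂ : ℕ → Ω → Measure S₂)
    (η₁lim : Measure S₁) (η₂lim : Measure S₂)
    [IsProbabilityMeasure η₂lim]
    (hprob₁ : ∀ N ω, IsProbabilityMeasure (η₁ N ω))
    (hprob₂ : ∀ N ω, IsProbabilityMeasure (η₂ N ω))
    (hmeas₁ : ∀ N, Measurable (η₁ N)) (hmeas₂ : ∀ N, Measurable (η₂ N))
    (hindep : IndepFun (fun ω (N : ℕ) => η₁ N ω) (fun ω (N : ℕ) => η₂ N ω) P)
    (p C : ℝ) (hp : 1 ≤ p)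
    (h₁ : ∀ N : ℕ, 0 < N → ∀ φ : S₁ → ℝ, Measurable φ → ∀ M : ℝ, (∀ x, |φ x| ≤ M) →
      (∫ ω, |(∫ x, φ x ∂(η₁ N ω)) - ∫ x, φ x ∂η₁lim| ^ p ∂P) ^ (1 / p)
        ≤ C * M / Real.sqrt N)
    (h₂ : ∀ N : ℕ, 0 < N → ∀ φ : S₂ → ℝ, Measurable φ → ∀ M : ℝ, (∀ x, |φ x| ≤ M) →
      (∫ ω, |(∫ x, φ x ∂(η₂ N ω)) - ∫ x, φ x ∂η₂lim| ^ p ∂P) ^ (1 / p)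
        ≤ C * M / Real.sqrt N) :
    ∃ C' : ℝ, ∀ N : ℕ, 0 < N → ∀ φ : S₁ × S₂ → ℝ, Measurable φ →
      ∀ M : ℝ, (∀ x, |φ x| ≤ M) →
      (∫ ω, |(∫ x, ∫ y, φ (x, y) ∂(η₂ N ω) ∂(η₁ N ω))
          - ∫ x, ∫ y, φ (x, y) ∂η₂lim ∂η₁lim| ^ p ∂P) ^ (1 / p)
        ≤ C' * M / Real.sqrt N := by
  refine ⟨2 * C, fun N hN φ hφ M hM => ?_⟩
  have hp₀ : 0 < p := by linarith
  -- `ProbabilityMeasure`-valued, so that integrals against them are Markov-kernel integrals.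
  let X (ω : Ω) : ProbabilityMeasure S₁ := ⟨η₁ N ω, hprob₁ N ω⟩
  let Y (ω : Ω) : ProbabilityMeasure S₂ := ⟨η₂ N ω, hprob₂ N ω⟩
  let ν : ProbabilityMeasure S₂ := ⟨η₂lim, inferInstance⟩
  have hX : Measurable X := (hmeas₁ N).subtype_mk
  have hY : Measurable Y := (hmeas₂ N).subtype_mk
  have hXY : IndepFun X Y P :=
    (hindep.comp (measurable_pi_apply N) (measurable_pi_apply N)).subtype_mk _ _
  have hg : Measurable fun x => ∫ y, φ (x, y) ∂η₂lim :=
    hφ.stronglyMeasurable.integral_prod_right'.measurable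
  have hB := h₁ N hN _ hg M fun x => abs_integral_le_of_abs_le η₂lim fun y => hM (x, y)
  have hCM : 0 ≤ C * M / Real.sqrt N :=
    (Real.rpow_nonneg (integral_nonneg fun ω => by positivity) _).trans hB
  have hA : (∫ ω, |(∫ x, ∫ y, φ (x, y) ∂(η₂ N ω) ∂(η₁ N ω))
      - ∫ x, ∫ y, φ (x, y) ∂η₂lim ∂(η₁ N ω)| ^ p ∂P) ^ (1 / p) ≤ C * M / Real.sqrt N := by
    rw [one_div, Real.rpow_inv_le_iff_of_pos (integral_nonneg fun ω => by positivity) hCM hp₀]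
    refine integral_abs_integral_sub_rpow_le_of_indepFun hX hY hXY η₂lim hp hφ hM fun x => ?_
    rw [← Real.rpow_inv_le_iff_of_pos (integral_nonneg fun ω => by positivity) hCM hp₀, ← one_div]
    exact h₂ N hN _ (hφ.comp measurable_prodMk_left) M fun y => hM (x, y)
  calc _ ≤ _ + _ := integral_abs_sub_rpow_rpow_le_add hp
        (g := fun ω => ∫ x, ∫ y, φ (x, y) ∂η₂lim ∂(η₁ N ω))
        (memLp_integral_integral_sub_integral_integral hX hY (measurable_const (a := ν)) hφ hM _)
        ((hX.integral_integral_probabilityMeasure (measurable_const (a := ν)) hφ).sub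
          measurable_const).aestronglyMeasurable
    _ ≤ C * M / Real.sqrt N + C * M / Real.sqrt N := add_le_add hA hB
    _ = 2 * C * M / Real.sqrt N := by ring

/-- Product step preserves `L^p` inequalities: if two independent sequences of random
probability measures `η₁^N, η₂^N` converge to `η₁, η₂` at rate `C‖φ‖/√N` in `L^p`, then so does
the product `η₁^N × η₂^N` to `η₁ × η₂` (with some constant `C'`). -/
theorem stmt3
    {Ω : Type*} [MeasurableSpace Ω] (P : Measure Ω) [IsProbabilityMeasure P]
    {S₁ S₂ : Type*} [MeasurableSpace S₁] [MeasurableSpace S₂]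
    (η₁ : ℕ → Ω → Measure S₁) (η₂ : ℕ → Ω → Measure S₂)
    (η₁lim : Measure S₁) (η₂lim : Measure S₂)
    [IsProbabilityMeasure η₁lim] [IsProbabilityMeasure η₂lim]
    (hprob₁ : ∀ N ω, IsProbabilityMeasure (η₁ N ω))
    (hprob₂ : ∀ N ω, IsProbabilityMeasure (η₂ N ω))
    (hmeas₁ : ∀ N, Measurable (η₁ N)) (hmeas₂ : ∀ N, Measurable (η₂ N))
    (hindep : IndepFun (fun ω (N : ℕ) => η₁ N ω) (fun ω (N : ℕ) => η₂ N ω) P)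
    (p C : ℝ) (hp : 1 ≤ p)
    (h₁ : ∀ N : ℕ, 0 < N → ∀ φ : S₁ → ℝ, Measurable φ → ∀ M : ℝ, (∀ x, |φ x| ≤ M) →
      (∫ ω, |(∫ x, φ x ∂(η₁ N ω)) - ∫ x, φ x ∂η₁lim| ^ p ∂P) ^ (1 / p)
        ≤ C * M / Real.sqrt N)
    (h₂ : ∀ N : ℕ, 0 < N → ∀ φ : S₂ → ℝ, Measurable φ → ∀ M : ℝ, (∀ x, |φ x| ≤ M) →
      (∫ ω, |(∫ x, φ x ∂(η₂ N ω)) - ∫ x, φ x ∂η₂lim| ^ p ∂P) ^ (1 / p)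
        ≤ C * M / Real.sqrt N) :
    ∃ C' : ℝ, ∀ N : ℕ, 0 < N → ∀ φ : S₁ × S₂ → ℝ, Measurable φ →
      ∀ M : ℝ, (∀ x, |φ x| ≤ M) →
      (∫ ω, |(∫ x, ∫ y, φ (x, y) ∂(η₂ N ω) ∂(η₁ N ω))
          - ∫ x, ∫ y, φ (x, y) ∂η₂lim ∂η₁lim| ^ p ∂P) ^ (1 / p)
        ≤ C' * M / Real.sqrt N :=
  stmt3_general P η₁ η₂ η₁lim η₂lim hprob₁ hprob₂ hmeas₁ hmeas₂ hindep p C hp h₁ h₂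
end

section
/- Let (η₁^N)_{N≥1} and (η₂^N)_{N≥1} be independent sequences of random probability measures on (S₁,𝒮₁) and (S₂,𝒮₂) with probability-measure limits η₁, η₂, satisfying the bias estimates |E[η_k^N(φ)] − η_k(φ)| ≤ C‖φ‖/N for all N > 0, bounded measurable φ on S_k, k = 1,2. Then there is a constant C' such that |E[(η₁^N × η₂^N)(φ)] − (η₁ × η₂)(φ)| ≤ C'‖φ‖/N for all N > 0 and all bounded measurable φ on S₁ × S₂. -/
open MeasureTheory ProbabilityTheory
open scoped ENNReal NNReal

namespace Stmt4Aux

variable {S : Type*} [MeasurableSpace S]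

noncomputable instance : MeasurableSpace (ProbabilityMeasure S) :=
  Subtype.instMeasurableSpace

lemma measurable_toMeasure :
    Measurable (ProbabilityMeasure.toMeasure : ProbabilityMeasure S → Measure S) :=
  measurable_subtype_coe

/-- The tautological Markov kernel on probability measures. -/
noncomputable def tk (S : Type*) [MeasurableSpace S] : Kernel (ProbabilityMeasure S) S where
  toFun := fun a => (a : Measure S)
  measurable' := measurable_toMeasure

lemma tk_apply (a : ProbabilityMeasure S) : tk S a = (a : Measure S) := rfl

instance : IsMarkovKernel (tk S) := ⟨fun a => a.prop⟩

/-- Joint measurability of a parametrized lintegral in (probability measure, parameter). -/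
lemma measurable_lintegral_pm {α : Type*} [MeasurableSpace α] {f : α × S → ℝ≥0∞}
    (hf : Measurable f) :
    Measurable fun p : ProbabilityMeasure S × α => ∫⁻ y, f (p.2, y) ∂(p.1 : Measure S) := by
  have h := Measurable.lintegral_kernel_prod_right
    (κ := (tk S).prodMkRight α)
    (f := fun (p : ProbabilityMeasure S × α) y => f (p.2, y))
    (hf.comp ((measurable_fst.snd).prodMk measurable_snd))
  simpa [Kernel.prodMkRight_apply, tk_apply] using h

lemma abs_integral_le {μ : Measure S} [IsProbabilityMeasure μ] {h : S → ℝ} {M : ℝ}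
    (hb : ∀ x, |h x| ≤ M) : |∫ x, h x ∂μ| ≤ M := by
  have := norm_integral_le_of_norm_le_const (μ := μ) (f := h) (C := M)
    (Filter.Eventually.of_forall fun x => by simpa using hb x)
  simpa using this

lemma integrable_of_bdd {α : Type*} [MeasurableSpace α] {μ : Measure α} [IsFiniteMeasure μ]
    {h : α → ℝ} {M : ℝ} (hm : AEStronglyMeasurable h μ) (hb : ∀ x, |h x| ≤ M) :
    Integrable h μ :=
  Integrable.mono' (integrable_const M) hm
    (Filter.Eventually.of_forall fun x => by simpa using hb x)

lemma integral_eq_lintegral_shift {μ : Measure S} [IsProbabilityMeasure μ] {h : S → ℝ} {M : ℝ}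
    (hm : Measurable h) (hb : ∀ x, |h x| ≤ M) :
    ∫ x, h x ∂μ = (∫⁻ x, ENNReal.ofReal (h x + M) ∂μ).toReal - M := by
  have hi : Integrable h μ := integrable_of_bdd hm.aestronglyMeasurable hb
  have hiM : Integrable (fun x => h x + M) μ := hi.add (integrable_const M)
  have hnn : 0 ≤ᵐ[μ] fun x => h x + M :=
    Filter.Eventually.of_forall fun x => by
      simp only [Pi.zero_apply]; linarith [(abs_le.mp (hb x)).1]
  have h1 : ∫ x, (h x + M) ∂μ = (∫ x, h x ∂μ) + M := by
    rw [integral_add hi (integrable_const M), integral_const]; simp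
  have h2 : 0 ≤ ∫ x, (h x + M) ∂μ := by
    have := abs_integral_le (μ := μ) hb
    rw [h1]; linarith [(abs_le.mp this).1]
  rw [← ofReal_integral_eq_lintegral_ofReal hiM hnn, ENNReal.toReal_ofReal h2, h1]
  ring

lemma measurable_integral_pm {h : S → ℝ} {M : ℝ} (hm : Measurable h) (hb : ∀ x, |h x| ≤ M) :
    Measurable fun a : ProbabilityMeasure S => ∫ x, h x ∂(a : Measure S) := by
  have he : (fun a : ProbabilityMeasure S => ∫ x, h x ∂(a : Measure S))
      = fun a : ProbabilityMeasure S =>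
        (∫⁻ x, ENNReal.ofReal (h x + M) ∂(a : Measure S)).toReal - M := by
    funext a
    exact integral_eq_lintegral_shift hm hb
  rw [he]
  exact (((Measure.measurable_lintegral
    (ENNReal.measurable_ofReal.comp (hm.add measurable_const))).comp
      measurable_toMeasure).ennreal_toReal).sub measurable_const

lemma psi_eq {S₁ S₂ : Type*} [MeasurableSpace S₁] [MeasurableSpace S₂] {φ : S₁ × S₂ → ℝ} {M : ℝ}
    (hφ : Measurable φ) (hb : ∀ x, |φ x| ≤ M)
    (a : Measure S₁) (b : Measure S₂) [IsProbabilityMeasure a] [IsProbabilityMeasure b] :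
    (∫⁻ x, ∫⁻ y, ENNReal.ofReal (φ (x, y) + M) ∂b ∂a).toReal - M
      = ∫ x, ∫ y, φ (x, y) ∂b ∂a := by
  have hg : Measurable fun x => ∫ y, φ (x, y) ∂b :=
    (hφ.stronglyMeasurable.integral_prod_right').measurable
  have hgb : ∀ x, |∫ y, φ (x, y) ∂b| ≤ M := fun x => abs_integral_le (fun y => hb (x, y))
  have hinner : ∀ x, ∫⁻ y, ENNReal.ofReal (φ (x, y) + M) ∂b
      = ENNReal.ofReal ((∫ y, φ (x, y) ∂b) + M) := by
    intro x
    have hmx : Measurable fun y => φ (x, y) := hφ.comp measurable_prodMk_left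
    have hix : Integrable (fun y => φ (x, y)) b :=
      integrable_of_bdd hmx.aestronglyMeasurable (fun y => hb (x, y))
    have hixM : Integrable (fun y => φ (x, y) + M) b := hix.add (integrable_const M)
    have hnn : 0 ≤ᵐ[b] fun y => φ (x, y) + M :=
      Filter.Eventually.of_forall fun y => by
        simp only [Pi.zero_apply]; linarith [(abs_le.mp (hb (x, y))).1]
    rw [← ofReal_integral_eq_lintegral_ofReal hixM hnn]
    congr 1
    rw [integral_add hix (integrable_const M), integral_const]
    simp
  simp_rw [hinner]
  exact (integral_eq_lintegral_shift hg hgb).symm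

end Stmt4Aux

open Stmt4Aux

/-- Product step preserves bias estimates: if two independent sequences of random probability
measures `η₁^N, η₂^N` satisfy `|E[η_k^N(φ)] − η_k(φ)| ≤ C‖φ‖/N`, then so does the product
`η₁^N × η₂^N` relative to `η₁ × η₂` (with some constant `C'`). -/
theorem stmt4
    {Ω : Type*} [MeasurableSpace Ω] (P : Measure Ω) [IsProbabilityMeasure P]
    {S₁ S₂ : Type*} [MeasurableSpace S₁] [MeasurableSpace S₂]
    (η₁ : ℕ → Ω → Measure S₁) (η₂ : ℕ → Ω → Measure S₂)
    (η₁lim : Measure S₁) (η₂lim : Measure S₂)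
    [IsProbabilityMeasure η₁lim] [IsProbabilityMeasure η₂lim]
    (hprob₁ : ∀ N ω, IsProbabilityMeasure (η₁ N ω))
    (hprob₂ : ∀ N ω, IsProbabilityMeasure (η₂ N ω))
    (hmeas₁ : ∀ N, Measurable (η₁ N)) (hmeas₂ : ∀ N, Measurable (η₂ N))
    (hindep : IndepFun (fun ω (N : ℕ) => η₁ N ω) (fun ω (N : ℕ) => η₂ N ω) P)
    (C : ℝ)
    (h₁ : ∀ N : ℕ, 0 < N → ∀ φ : S₁ → ℝ, Measurable φ → ∀ M : ℝ, (∀ x, |φ x| ≤ M) →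
      |(∫ ω, (∫ x, φ x ∂(η₁ N ω)) ∂P) - ∫ x, φ x ∂η₁lim| ≤ C * M / N)
    (h₂ : ∀ N : ℕ, 0 < N → ∀ φ : S₂ → ℝ, Measurable φ → ∀ M : ℝ, (∀ x, |φ x| ≤ M) →
      |(∫ ω, (∫ x, φ x ∂(η₂ N ω)) ∂P) - ∫ x, φ x ∂η₂lim| ≤ C * M / N) :
    ∃ C' : ℝ, ∀ N : ℕ, 0 < N → ∀ φ : S₁ × S₂ → ℝ, Measurable φ →
      ∀ M : ℝ, (∀ x, |φ x| ≤ M) →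
      |(∫ ω, (∫ x, ∫ y, φ (x, y) ∂(η₂ N ω) ∂(η₁ N ω)) ∂P)
          - ∫ x, ∫ y, φ (x, y) ∂η₂lim ∂η₁lim| ≤ C' * M / N := by
  classical
  refine ⟨2 * C, fun N hN φ hφ M hM => ?_⟩
  -- the random probability measures, as `ProbabilityMeasure`-valued random variables
  have hA : Measurable (fun ω => (⟨η₁ N ω, hprob₁ N ω⟩ : ProbabilityMeasure S₁)) :=
    Measurable.subtype_mk (hmeas₁ N)
  have hB : Measurable (fun ω => (⟨η₂ N ω, hprob₂ N ω⟩ : ProbabilityMeasure S₂)) :=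
    Measurable.subtype_mk (hmeas₂ N)
  set A : Ω → ProbabilityMeasure S₁ := fun ω => ⟨η₁ N ω, hprob₁ N ω⟩ with hA_def
  set B : Ω → ProbabilityMeasure S₂ := fun ω => ⟨η₂ N ω, hprob₂ N ω⟩ with hB_def
  -- independence of `A` and `B`
  have hABindep : IndepFun A B P := by
    have hs₁ : MeasurableSet {g : ℕ → Measure S₁ | IsProbabilityMeasure (g N)} := by
      have he : {g : ℕ → Measure S₁ | IsProbabilityMeasure (g N)}
          = (fun g : ℕ → Measure S₁ => g N Set.univ) ⁻¹' {1} := by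
        ext g; simp [isProbabilityMeasure_iff]
      rw [he]
      exact ((Measure.measurable_coe MeasurableSet.univ).comp (measurable_pi_apply N))
        (measurableSet_singleton 1)
    have hs₂ : MeasurableSet {g : ℕ → Measure S₂ | IsProbabilityMeasure (g N)} := by
      have he : {g : ℕ → Measure S₂ | IsProbabilityMeasure (g N)}
          = (fun g : ℕ → Measure S₂ => g N Set.univ) ⁻¹' {1} := by
        ext g; simp [isProbabilityMeasure_iff]
      rw [he]
      exact ((Measure.measurable_coe MeasurableSet.univ).comp (measurable_pi_apply N))
        (measurableSet_singleton 1)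
    have hF₁ : Measurable (fun g : ℕ → Measure S₁ =>
        if hg : g ∈ {g : ℕ → Measure S₁ | IsProbabilityMeasure (g N)}
        then (⟨g N, hg⟩ : ProbabilityMeasure S₁) else ⟨η₁lim, inferInstance⟩) := by
      refine Measurable.dite
        (f := fun gp : {g : ℕ → Measure S₁ // g ∈ {g : ℕ → Measure S₁ | IsProbabilityMeasure (g N)}} =>
          (⟨gp.1 N, gp.2⟩ : ProbabilityMeasure S₁)) ?_ measurable_const hs₁
      exact Measurable.subtype_mk ((measurable_pi_apply N).comp measurable_subtype_coe)
    have hF₂ : Measurable (fun g : ℕ → Measure S₂ =>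
        if hg : g ∈ {g : ℕ → Measure S₂ | IsProbabilityMeasure (g N)}
        then (⟨g N, hg⟩ : ProbabilityMeasure S₂) else ⟨η₂lim, inferInstance⟩) := by
      refine Measurable.dite
        (f := fun gp : {g : ℕ → Measure S₂ // g ∈ {g : ℕ → Measure S₂ | IsProbabilityMeasure (g N)}} =>
          (⟨gp.1 N, gp.2⟩ : ProbabilityMeasure S₂)) ?_ measurable_const hs₂
      exact Measurable.subtype_mk ((measurable_pi_apply N).comp measurable_subtype_coe)
    have h := hindep.comp hF₁ hF₂
    have e₁ : ((fun g : ℕ → Measure S₁ =>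
        if hg : g ∈ {g : ℕ → Measure S₁ | IsProbabilityMeasure (g N)}
        then (⟨g N, hg⟩ : ProbabilityMeasure S₁) else ⟨η₁lim, inferInstance⟩)
          ∘ fun ω (N : ℕ) => η₁ N ω) = A := by
      funext ω
      exact dif_pos (hprob₁ N ω)
    have e₂ : ((fun g : ℕ → Measure S₂ =>
        if hg : g ∈ {g : ℕ → Measure S₂ | IsProbabilityMeasure (g N)}
        then (⟨g N, hg⟩ : ProbabilityMeasure S₂) else ⟨η₂lim, inferInstance⟩)
          ∘ fun ω (N : ℕ) => η₂ N ω) = B := by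
      funext ω
      exact dif_pos (hprob₂ N ω)
    rwa [e₁, e₂] at h
  -- laws
  set L₁ : Measure (ProbabilityMeasure S₁) := P.map A with hL₁_def
  set L₂ : Measure (ProbabilityMeasure S₂) := P.map B with hL₂_def
  haveI : IsProbabilityMeasure L₁ := Measure.isProbabilityMeasure_map hA.aemeasurable
  haveI : IsProbabilityMeasure L₂ := Measure.isProbabilityMeasure_map hB.aemeasurable
  have hmap : P.map (fun ω => (A ω, B ω)) = L₁.prod L₂ :=
    (indepFun_iff_map_prod_eq_prod_map_map hA.aemeasurable hB.aemeasurable).mp hABindep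
  -- the functional Ψ on pairs of probability measures
  set Ψ : ProbabilityMeasure S₁ × ProbabilityMeasure S₂ → ℝ := fun p =>
    (∫⁻ x, ∫⁻ y, ENNReal.ofReal (φ (x, y) + M) ∂(p.2 : Measure S₂) ∂(p.1 : Measure S₁)).toReal
      - M with hΨ_def
  have hΨeq : ∀ (a : ProbabilityMeasure S₁) (b : ProbabilityMeasure S₂),
      Ψ (a, b) = ∫ x, ∫ y, φ (x, y) ∂(b : Measure S₂) ∂(a : Measure S₁) := by
    intro a b
    exact psi_eq hφ hM (a : Measure S₁) (b : Measure S₂)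
  have hΨmeas : Measurable Ψ := by
    have hj : Measurable fun q : ProbabilityMeasure S₂ × S₁ =>
        ∫⁻ y, ENNReal.ofReal (φ (q.2, y) + M) ∂(q.1 : Measure S₂) := by
      exact measurable_lintegral_pm
        (f := fun z : S₁ × S₂ => ENNReal.ofReal (φ z + M))
        (ENNReal.measurable_ofReal.comp (hφ.add measurable_const))
    have h2 : Measurable fun p : ProbabilityMeasure S₁ × ProbabilityMeasure S₂ =>
        ∫⁻ x, ∫⁻ y, ENNReal.ofReal (φ (x, y) + M) ∂(p.2 : Measure S₂)
            ∂(p.1 : Measure S₁) := by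
      exact measurable_lintegral_pm
        (f := fun q : ProbabilityMeasure S₂ × S₁ =>
          ∫⁻ y, ENNReal.ofReal (φ (q.2, y) + M) ∂(q.1 : Measure S₂)) hj
    exact (h2.ennreal_toReal).sub measurable_const
  have hΨbd : ∀ p, |Ψ p| ≤ M := by
    rintro ⟨a, b⟩
    rw [hΨeq a b]
    exact abs_integral_le fun x => abs_integral_le fun y => hM (x, y)
  have hΨint : Integrable Ψ (L₁.prod L₂) :=
    integrable_of_bdd hΨmeas.aestronglyMeasurable hΨbd
  -- the averaged inner function m and limit inner function g
  set m : S₁ → ℝ := fun x => ∫ ω, ∫ y, φ (x, y) ∂(η₂ N ω) ∂P with hm_def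
  set g : S₁ → ℝ := fun x => ∫ y, φ (x, y) ∂η₂lim with hg_def
  have hgmeas : Measurable g := (hφ.stronglyMeasurable.integral_prod_right').measurable
  have hgbd : ∀ x, |g x| ≤ M := fun x => abs_integral_le fun y => hM (x, y)
  -- joint measurability of (ω, x) ↦ ∫ y, φ (x, y) ∂(η₂ N ω)
  have hk : StronglyMeasurable fun p : Ω × S₁ => ∫ y, φ (p.2, y) ∂(η₂ N p.1) := by
    haveI : IsMarkovKernel (⟨η₂ N, hmeas₂ N⟩ : Kernel Ω S₂) := ⟨fun ω => hprob₂ N ω⟩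
    have h := StronglyMeasurable.integral_kernel_prod_right'
      (κ := (⟨η₂ N, hmeas₂ N⟩ : Kernel Ω S₂).prodMkRight S₁)
      (f := fun q : (Ω × S₁) × S₂ => φ (q.1.2, q.2))
      ((hφ.comp ((measurable_fst.snd).prodMk measurable_snd)).stronglyMeasurable)
    simpa [Kernel.prodMkRight_apply] using h
  have hkbd : ∀ p : Ω × S₁, |∫ y, φ (p.2, y) ∂(η₂ N p.1)| ≤ M := by
    intro p
    haveI := hprob₂ N p.1
    exact abs_integral_le fun y => hM (p.2, y)
  have hmmeas : Measurable m := by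
    have h := (hk.comp_measurable measurable_swap).integral_prod_right' (ν := P)
    exact h.measurable
  have hmbd : ∀ x, |m x - g x| ≤ C * M / N := by
    intro x
    exact h₂ N hN (fun y => φ (x, y)) (hφ.comp measurable_prodMk_left) M (fun y => hM (x, y))
  have hmabs : ∀ x, |m x| ≤ M + C * M / N := by
    intro x
    have h1 := hmbd x
    have h2 := hgbd x
    calc |m x| = |(m x - g x) + g x| := by ring_nf
      _ ≤ |m x - g x| + |g x| := abs_add_le _ _
      _ ≤ C * M / N + M := add_le_add h1 h2
      _ = M + C * M / N := by ring
  -- the functions u and v on probability measures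
  set u : ProbabilityMeasure S₁ → ℝ := fun a => ∫ x, m x ∂(a : Measure S₁) with hu_def
  set v : ProbabilityMeasure S₁ → ℝ := fun a => ∫ x, g x ∂(a : Measure S₁) with hv_def
  have humeas : Measurable u := measurable_integral_pm hmmeas hmabs
  have hvmeas : Measurable v := measurable_integral_pm hgmeas hgbd
  have huint : Integrable u L₁ :=
    integrable_of_bdd humeas.aestronglyMeasurable (fun a => abs_integral_le hmabs)
  have hvint : Integrable v L₁ :=
    integrable_of_bdd hvmeas.aestronglyMeasurable (fun a => abs_integral_le hgbd)
  -- inner integral computation: ∫ b, Ψ (a, b) ∂L₂ = u a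
  have hinner : ∀ a : ProbabilityMeasure S₁, ∫ b, Ψ (a, b) ∂L₂ = u a := by
    intro a
    have hgm : Measurable fun b : ProbabilityMeasure S₂ => Ψ (a, b) :=
      hΨmeas.comp (measurable_const.prodMk measurable_id)
    have e0 : ∫ b, Ψ (a, b) ∂L₂ = ∫ ω, Ψ (a, B ω) ∂P := by
      rw [hL₂_def]
      exact integral_map hB.aemeasurable hgm.aestronglyMeasurable
    rw [e0]
    have e : ∀ ω, Ψ (a, B ω) = ∫ x, (∫ y, φ (x, y) ∂(η₂ N ω)) ∂(a : Measure S₁) := by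
      intro ω
      exact hΨeq a (B ω)
    simp_rw [e]
    have hswap := integral_integral_swap
      (f := fun (ω : Ω) (x : S₁) => ∫ y, φ (x, y) ∂(η₂ N ω))
      (μ := P) (ν := (a : Measure S₁))
      (integrable_of_bdd hk.aestronglyMeasurable hkbd)
    rw [hswap]
  -- the main identity
  have key : (∫ ω, (∫ x, ∫ y, φ (x, y) ∂(η₂ N ω) ∂(η₁ N ω)) ∂P) = ∫ a, u a ∂L₁ := by
    have e1 : ∀ ω, (∫ x, ∫ y, φ (x, y) ∂(η₂ N ω) ∂(η₁ N ω)) = Ψ (A ω, B ω) := by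
      intro ω
      exact (hΨeq (A ω) (B ω)).symm
    simp_rw [e1]
    have e2 : ∫ ω, Ψ (A ω, B ω) ∂P = ∫ p, Ψ p ∂(P.map (fun ω => (A ω, B ω))) :=
      (integral_map (hA.aemeasurable.prodMk hB.aemeasurable)
        hΨmeas.aestronglyMeasurable).symm
    rw [e2, hmap, integral_prod Ψ hΨint]
    simp_rw [hinner]
  -- T₁' identity
  have hT1 : ∫ a, v a ∂L₁ = ∫ ω, ∫ x, g x ∂(η₁ N ω) ∂P := by
    have e0 : ∫ a, v a ∂L₁ = ∫ ω, v (A ω) ∂P := by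
      rw [hL₁_def]
      exact integral_map hA.aemeasurable hvmeas.aestronglyMeasurable
    rw [e0]
    rfl
  -- the final bound
  have hg_final : ∫ x, ∫ y, φ (x, y) ∂η₂lim ∂η₁lim = ∫ x, g x ∂η₁lim := rfl
  have hsplit : (∫ ω, (∫ x, ∫ y, φ (x, y) ∂(η₂ N ω) ∂(η₁ N ω)) ∂P)
        - ∫ x, ∫ y, φ (x, y) ∂η₂lim ∂η₁lim
      = (∫ a, (u a - v a) ∂L₁)
        + ((∫ ω, ∫ x, g x ∂(η₁ N ω) ∂P) - ∫ x, g x ∂η₁lim) := by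
    rw [key, hg_final, integral_sub huint hvint, ← hT1]
    ring
  have hbound1 : |∫ a, (u a - v a) ∂L₁| ≤ C * M / N := by
    have hb : ∀ a : ProbabilityMeasure S₁, |u a - v a| ≤ C * M / N := by
      intro a
      have he : u a - v a = ∫ x, (m x - g x) ∂(a : Measure S₁) := by
        rw [hu_def, hv_def]
        exact (integral_sub
          (integrable_of_bdd hmmeas.aestronglyMeasurable hmabs)
          (integrable_of_bdd hgmeas.aestronglyMeasurable hgbd)).symm
      rw [he]
      exact abs_integral_le hmbd
    exact abs_integral_le hb
  have hbound2 : |(∫ ω, ∫ x, g x ∂(η₁ N ω) ∂P) - ∫ x, g x ∂η₁lim| ≤ C * M / N :=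
    h₁ N hN g hgmeas M hgbd
  calc |(∫ ω, (∫ x, ∫ y, φ (x, y) ∂(η₂ N ω) ∂(η₁ N ω)) ∂P)
        - ∫ x, ∫ y, φ (x, y) ∂η₂lim ∂η₁lim|
      = |(∫ a, (u a - v a) ∂L₁)
        + ((∫ ω, ∫ x, g x ∂(η₁ N ω) ∂P) - ∫ x, g x ∂η₁lim)| := by rw [hsplit]
    _ ≤ |∫ a, (u a - v a) ∂L₁|
        + |(∫ ω, ∫ x, g x ∂(η₁ N ω) ∂P) - ∫ x, g x ∂η₁lim| := abs_add_le _ _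
    _ ≤ C * M / N + C * M / N := add_le_add hbound1 hbound2
    _ = 2 * C * M / N := by ring
end

section
/- Let π be a probability measure on (E,ℰ), w : E → (0,∞) a bounded measurable weight function with π(w) > 0, and let (π^N)_{N≥1} be random probability measures satisfying E[|π^N(ψ) − π(ψ)|^p]^{1/p} ≤ C‖ψ‖/√N for some p ≥ 1 and all bounded measurable ψ. Define the reweighted measures π̃^N(φ) := π^N(wφ)/π^N(w) and π̃(φ) := π(wφ)/π(w). Then there is a constant C' such that E[|π̃^N(φ) − π̃(φ)|^p]^{1/p} ≤ C'‖φ‖/√N for all N > 0 and all bounded measurable φ. -/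
open MeasureTheory
open scoped ENNReal

/-!
With `t = π(wφ)/π(w)`, the reweighting error is
`π^N(wφ)/π^N(w) - t = (π^N(wφ) - π(wφ)) / π(w) + (π^N(wφ)/π^N(w)) (π(w) - π^N(w)) / π(w)`,
and `|π^N(wφ)/π^N(w)| ≤ ‖φ‖` because `w > 0`. So the error is dominated pointwise by
`(|π^N(wφ) - π(wφ)| + ‖φ‖ |π^N(w) - π(w)|) / π(w)`, and Minkowski's inequality bounds its
`L^p` norm by the assumed rates for the two test functions `wφ` and `w`.
-/

lemma abs_div_sub_div_le {a b α β M : ℝ} (hb : 0 < b) (hβ : 0 < β) (ha : |a| ≤ M * b) :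
    |a / b - α / β| ≤ (|a - α| + M * |b - β|) / β := by
  have hab : |a / b| ≤ M := by rwa [abs_div, abs_of_pos hb, div_le_iff₀ hb]
  have key : a / b - α / β = (a - α) / β + a / b * ((β - b) / β) := by
    field_simp
    ring
  rw [key, add_div]
  refine (abs_add_le _ _).trans (add_le_add (by rw [abs_div, abs_of_pos hβ]) ?_)
  calc |a / b * ((β - b) / β)| = |a / b| * |b - β| / β := by
        rw [abs_mul, abs_div (β - b), abs_of_pos hβ, abs_sub_comm, mul_div_assoc]
    _ ≤ M * |b - β| / β := by gcongr

lemma abs_mul_le_of_pos_of_le {a b A B : ℝ} (ha : 0 < a) (haA : a ≤ A) (hb : |b| ≤ B) :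
    |a * b| ≤ A * B := by
  rw [abs_mul, abs_of_pos ha]
  exact mul_le_mul haA hb (abs_nonneg _) (ha.le.trans haA)

section Integral

variable {E : Type*} [MeasurableSpace E] {μ : Measure E} {w φ : E → ℝ} {M : ℝ}

lemma abs_integral_mul_le (hw₀ : ∀ x, 0 ≤ w x) (hw : Integrable w μ) (hφ : ∀ x, |φ x| ≤ M) :
    |∫ x, w x * φ x ∂μ| ≤ M * ∫ x, w x ∂μ := by
  rw [← Real.norm_eq_abs, ← integral_const_mul]
  refine norm_integral_le_of_norm_le (hw.const_mul M) (ae_of_all _ fun x ↦ ?_)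
  rw [Real.norm_eq_abs, abs_mul, abs_of_nonneg (hw₀ x), mul_comm]
  exact mul_le_mul_of_nonneg_right (hφ x) (hw₀ x)

lemma integral_pos_of_forall_pos [NeZero μ] (hw : ∀ x, 0 < w x) (hint : Integrable w μ) :
    0 < ∫ x, w x ∂μ := by
  rw [integral_pos_iff_support_of_nonneg (fun x ↦ (hw x).le) hint,
    Set.eq_univ_of_forall fun x ↦ Function.mem_support.mpr (hw x).ne']
  exact Measure.measure_univ_pos.mpr (NeZero.ne μ)

end Integral

section RandomMeasure

variable {Ω E : Type*} [MeasurableSpace Ω] [MeasurableSpace E] {κ : Ω → Measure E}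

lemma measurable_integral_of_measurable_measure (hκ : Measurable κ) {f : E → ℝ}
    (hf : Measurable f) : Measurable fun ω ↦ ∫ x, f x ∂κ ω :=
  (StronglyMeasurable.integral_kernel (κ := ⟨κ, hκ⟩) hf.stronglyMeasurable).measurable

lemma memLp_integral_of_abs_le (P : Measure Ω) [IsFiniteMeasure P] (hκ : Measurable κ)
    [∀ ω, IsProbabilityMeasure (κ ω)] {f : E → ℝ} (hf : Measurable f) {K : ℝ}
    (hK : ∀ x, |f x| ≤ K) (p : ℝ≥0∞) : MemLp (fun ω ↦ ∫ x, f x ∂κ ω) p P := by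
  refine .of_bound (measurable_integral_of_measurable_measure hκ hf).aestronglyMeasurable K
    (ae_of_all _ fun ω ↦ ?_)
  simpa using norm_integral_le_of_norm_le_const (μ := κ ω)
    (ae_of_all _ fun x ↦ (Real.norm_eq_abs _).trans_le (hK x))

end RandomMeasure

lemma lpNorm_ofReal_eq_integral_abs_rpow {Ω : Type*} [MeasurableSpace Ω] {P : Measure Ω}
    {X : Ω → ℝ} (hX : AEStronglyMeasurable X P) {p : ℝ} (hp : 0 < p) :
    lpNorm X (ENNReal.ofReal p) P = (∫ ω, |X ω| ^ p ∂P) ^ (1 / p) := by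
  rw [lpNorm_eq_integral_norm_rpow_toReal (by simpa using hp) ENNReal.ofReal_ne_top hX,
    ENNReal.toReal_ofReal hp.le, one_div]
  simp only [Real.norm_eq_abs]

lemma lpNorm_le_of_abs_le_add {Ω : Type*} [MeasurableSpace Ω] {P : Measure Ω}
    {X Y Z : Ω → ℝ} {p : ℝ≥0∞} (hX : MemLp X p P) (hY : MemLp Y p P) (hp : 1 ≤ p)
    {a b : ℝ} (ha : 0 ≤ a) (hb : 0 ≤ b) (h : ∀ ω, |Z ω| ≤ a * |X ω| + b * |Y ω|) :
    lpNorm Z p P ≤ a * lpNorm X p P + b * lpNorm Y p P := by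
  have haX : MemLp (fun ω ↦ a * |X ω|) p P := hX.abs.const_mul a
  have hbY : MemLp (fun ω ↦ b * |Y ω|) p P := hY.abs.const_mul b
  calc lpNorm Z p P ≤ lpNorm ((fun ω ↦ a * |X ω|) + fun ω ↦ b * |Y ω|) p P :=
        lpNorm_mono_real (haX.add hbY) h
    _ ≤ lpNorm (fun ω ↦ a * |X ω|) p P + lpNorm (fun ω ↦ b * |Y ω|) p P :=
        lpNorm_add_le haX hp
    _ = a * lpNorm X p P + b * lpNorm Y p P := by
        rw [show (fun ω ↦ a * |X ω|) = a • fun ω ↦ |X ω| from rfl,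
          show (fun ω ↦ b * |Y ω|) = b • fun ω ↦ |Y ω| from rfl,
          lpNorm_const_smul, lpNorm_const_smul, lpNorm_fun_abs hX.aestronglyMeasurable,
          lpNorm_fun_abs hY.aestronglyMeasurable, coe_nnnorm, coe_nnnorm, Real.norm_of_nonneg ha,
          Real.norm_of_nonneg hb]

theorem lpNorm_reweighted_sub_le {Ω E : Type*} [MeasurableSpace Ω] [MeasurableSpace E]
    (P : Measure Ω) [IsFiniteMeasure P] {κ : Ω → Measure E} (hκ : Measurable κ)
    [∀ ω, IsProbabilityMeasure (κ ω)] (π : Measure E) [IsProbabilityMeasure π]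
    {w φ : E → ℝ} (hwm : Measurable w) (hw : ∀ x, 0 < w x) {Mw : ℝ} (hwMw : ∀ x, w x ≤ Mw)
    (hφm : Measurable φ) {M : ℝ} (hφ : ∀ x, |φ x| ≤ M) {p : ℝ≥0∞} (hp : 1 ≤ p) :
    lpNorm (fun ω ↦ (∫ x, w x * φ x ∂κ ω) / (∫ x, w x ∂κ ω)
        - (∫ x, w x * φ x ∂π) / ∫ x, w x ∂π) p P
      ≤ (lpNorm (fun ω ↦ ∫ x, w x * φ x ∂κ ω - ∫ x, w x * φ x ∂π) p P
          + M * lpNorm (fun ω ↦ ∫ x, w x ∂κ ω - ∫ x, w x ∂π) p P) / ∫ x, w x ∂π := by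
  obtain ⟨x₀⟩ := nonempty_of_isProbabilityMeasure π
  have hwabs : ∀ x, |w x| ≤ Mw := fun x ↦ (abs_of_pos (hw x)).trans_le (hwMw x)
  have hwφ : ∀ x, |w x * φ x| ≤ Mw * M := fun x ↦ abs_mul_le_of_pos_of_le (hw x) (hwMw x) (hφ x)
  have hint : ∀ (ν : Measure E) [IsProbabilityMeasure ν], Integrable w ν := fun ν _ ↦
    .of_bound hwm.aestronglyMeasurable Mw (ae_of_all _ hwabs)
  have hβ : 0 < ∫ x, w x ∂π := integral_pos_of_forall_pos hw (hint π)
  have hM : 0 ≤ M := (abs_nonneg _).trans (hφ x₀)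
  refine (lpNorm_le_of_abs_le_add (X := fun ω ↦ ∫ x, w x * φ x ∂κ ω - ∫ x, w x * φ x ∂π)
    (Y := fun ω ↦ ∫ x, w x ∂κ ω - ∫ x, w x ∂π) (a := (∫ x, w x ∂π)⁻¹) (b := M / ∫ x, w x ∂π)
    ((memLp_integral_of_abs_le P hκ (hwm.mul hφm) hwφ p).sub (memLp_const _))
    ((memLp_integral_of_abs_le P hκ hwm hwabs p).sub (memLp_const _)) hp
    (by positivity) (by positivity) fun ω ↦ ?_).trans_eq (by ring)
  refine (abs_div_sub_div_le (integral_pos_of_forall_pos hw (hint (κ ω))) hβ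
    (abs_integral_mul_le (fun x ↦ (hw x).le) (hint (κ ω)) hφ)).trans_eq ?_
  ring

theorem stmt5_general
    {Ω : Type*} [MeasurableSpace Ω] (P : Measure Ω) [IsProbabilityMeasure P]
    {E : Type*} [MeasurableSpace E]
    (π : Measure E) [IsProbabilityMeasure π]
    (w : E → ℝ) (hwmeas : Measurable w) (hwpos : ∀ x, 0 < w x)
    (Mw : ℝ) (hwbd : ∀ x, w x ≤ Mw)
    (πN : ℕ → Ω → Measure E)
    (hprob : ∀ N ω, IsProbabilityMeasure (πN N ω))
    (hmeas : ∀ N, Measurable (πN N))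
    (p C : ℝ) (hp : 1 ≤ p)
    (hLp : ∀ N : ℕ, 0 < N → ∀ ψ : E → ℝ, Measurable ψ → ∀ M : ℝ, (∀ x, |ψ x| ≤ M) →
      (∫ ω, |(∫ x, ψ x ∂(πN N ω)) - ∫ x, ψ x ∂π| ^ p ∂P) ^ (1 / p)
        ≤ C * M / Real.sqrt N) :
    ∃ C' : ℝ, ∀ N : ℕ, 0 < N → ∀ φ : E → ℝ, Measurable φ → ∀ M : ℝ, (∀ x, |φ x| ≤ M) →
      (∫ ω, |(∫ x, w x * φ x ∂(πN N ω)) / (∫ x, w x ∂(πN N ω))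
          - (∫ x, w x * φ x ∂π) / (∫ x, w x ∂π)| ^ p ∂P) ^ (1 / p)
        ≤ C' * M / Real.sqrt N := by
  have hp₀ : 0 < p := one_pos.trans_le hp
  have hLp' : ∀ N : ℕ, 0 < N → ∀ ψ : E → ℝ, Measurable ψ → ∀ M : ℝ, (∀ x, |ψ x| ≤ M) →
      lpNorm (fun ω ↦ ∫ x, ψ x ∂πN N ω - ∫ x, ψ x ∂π) (ENNReal.ofReal p) P
        ≤ C * M / Real.sqrt N := fun N hN ψ hψ M hM ↦ by
    rw [lpNorm_ofReal_eq_integral_abs_rpow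
      ((measurable_integral_of_measurable_measure (hmeas N) hψ).sub_const _).aestronglyMeasurable
      hp₀]
    exact hLp N hN ψ hψ M hM
  refine ⟨2 * C * Mw / ∫ x, w x ∂π, fun N hN φ hφ M hM ↦ ?_⟩
  have := hprob N
  have hM₀ : 0 ≤ M := (abs_nonneg _).trans (hM (nonempty_of_isProbabilityMeasure π).some)
  have hwabs : ∀ x, |w x| ≤ Mw := fun x ↦ (abs_of_pos (hwpos x)).trans_le (hwbd x)
  have hwφ : ∀ x, |w x * φ x| ≤ Mw * M := fun x ↦ abs_mul_le_of_pos_of_le (hwpos x) (hwbd x) (hM x)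
  refine (lpNorm_ofReal_eq_integral_abs_rpow ?_ hp₀).symm.trans_le ?_
  · exact ((measurable_integral_of_measurable_measure (hmeas N) (hwmeas.mul hφ)).div
      (measurable_integral_of_measurable_measure (hmeas N) hwmeas)).sub_const _
      |>.aestronglyMeasurable
  calc _ ≤ (lpNorm (fun ω ↦ ∫ x, w x * φ x ∂πN N ω - ∫ x, w x * φ x ∂π) (.ofReal p) P
          + M * lpNorm (fun ω ↦ ∫ x, w x ∂πN N ω - ∫ x, w x ∂π) (.ofReal p) P)
          / ∫ x, w x ∂π :=
        lpNorm_reweighted_sub_le P (hmeas N) π hwmeas hwpos hwbd hφ hM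
          (by simpa using ENNReal.ofReal_le_ofReal hp)
    _ ≤ (C * (Mw * M) / Real.sqrt N + M * (C * Mw / Real.sqrt N)) / ∫ x, w x ∂π := by
        have := integral_nonneg (μ := π) (f := w) fun x ↦ (hwpos x).le
        gcongr
        exacts [hLp' N hN _ (hwmeas.mul hφ) _ hwφ, hLp' N hN w hwmeas Mw hwabs]
    _ = 2 * C * Mw / (∫ x, w x ∂π) * M / Real.sqrt N := by ring

/-- Correction (reweighting) step preserves `L^p` inequalities: if the random probability
measures `π^N` approximate `π` at `L^p` rate `C‖ψ‖/√N`, and `w` is a bounded, everywhere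
positive measurable weight with `π(w) > 0`, then the reweighted measures
`π̃^N(φ) = π^N(wφ)/π^N(w)` approximate `π̃(φ) = π(wφ)/π(w)` at the same rate (with a new
constant `C'`). -/
theorem stmt5
    {Ω : Type*} [MeasurableSpace Ω] (P : Measure Ω) [IsProbabilityMeasure P]
    {E : Type*} [MeasurableSpace E]
    (π : Measure E) [IsProbabilityMeasure π]
    (w : E → ℝ) (hwmeas : Measurable w) (hwpos : ∀ x, 0 < w x)
    (Mw : ℝ) (hwbd : ∀ x, w x ≤ Mw)
    (hπw : 0 < ∫ x, w x ∂π)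
    (πN : ℕ → Ω → Measure E)
    (hprob : ∀ N ω, IsProbabilityMeasure (πN N ω))
    (hmeas : ∀ N, Measurable (πN N))
    (hposN : ∀ N : ℕ, ∀ᵐ ω ∂P, 0 < ∫ x, w x ∂(πN N ω))
    (p C : ℝ) (hp : 1 ≤ p)
    (hLp : ∀ N : ℕ, 0 < N → ∀ ψ : E → ℝ, Measurable ψ → ∀ M : ℝ, (∀ x, |ψ x| ≤ M) →
      (∫ ω, |(∫ x, ψ x ∂(πN N ω)) - ∫ x, ψ x ∂π| ^ p ∂P) ^ (1 / p)
        ≤ C * M / Real.sqrt N) :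
    ∃ C' : ℝ, ∀ N : ℕ, 0 < N → ∀ φ : E → ℝ, Measurable φ → ∀ M : ℝ, (∀ x, |φ x| ≤ M) →
      (∫ ω, |(∫ x, w x * φ x ∂(πN N ω)) / (∫ x, w x ∂(πN N ω))
          - (∫ x, w x * φ x ∂π) / (∫ x, w x ∂π)| ^ p ∂P) ^ (1 / p)
        ≤ C' * M / Real.sqrt N :=
  stmt5_general P π w hwmeas hwpos Mw hwbd πN hprob hmeas p C hp hLp
end

section
/- Let (E₁,ℰ₁), (E₂,ℰ₂) be measurable spaces, π_{-} a probability measure on E₁, K a Markov kernel from E₁ to E₂, and π := π_{-} ⊗ K the induced measure on E₁ × E₂ (i.e. π(d(x,y)) = π_{-}(dx) K(x,dy)). Suppose the random probability measures ε^N on E₁ satisfy E[|ε^N(ψ) − π_{-}(ψ)|^p]^{1/p} ≤ C‖ψ‖/√N for all bounded measurable ψ, and conditionally on ε^N being the empirical measure of points X¹,…,X^N, draw Yⁿ ∼ K(Xⁿ,·) independently and set π^N := N^{-1} ∑_n δ_{(Xⁿ,Yⁿ)}. Then there is a constant C' with E[|π^N(φ) − π(φ)|^p]^{1/p} ≤ C'‖φ‖/√N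 for all N > 0 and all bounded measurable φ on E₁ × E₂. -/
/-!
Put `ψ x = ∫ φ (x, u) ∂κ x`. The error `π^N(φ) - π(φ)` splits into the selection error
`ε^N(ψ) - π₋(ψ)`, which the hypothesis controls, and the mutation error
`N⁻¹ ∑ₙ (φ(Xⁿ, Yⁿ) - ψ(Xⁿ))`. Given `𝒢`, the joint law of the particles is `law(X) ⊗ ∏ₙ κ(Xⁿ)`,
so the summands of the mutation error are conditionally independent, centred and confined to an
interval of length `2‖φ‖`. In place of the Marcinkiewicz–Zygmund inequality we use Hoeffding's
lemma: the mutation error is conditionally sub-Gaussian with variance proxy `‖φ‖² / N`, and a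
sub-Gaussian variable with proxy `c` has `2k`-th moment at most `2 √e (2k)! c^k`. This bounds
the mutation error in `L^{2k}`, hence in `L^p` for `p ≤ 2k`, by a multiple of `‖φ‖ / √N`, and
Minkowski's inequality adds the two errors.
-/

open MeasureTheory ProbabilityTheory Real Set
open scoped ENNReal NNReal

namespace ProbabilityTheory.Kernel

variable {α ι : Type*} [MeasurableSpace α] [Fintype ι] {E : ι → Type*}
  [∀ i, MeasurableSpace (E i)]

lemma measurable_measure_pi (κ : ∀ i, Kernel α (E i)) [∀ i, IsFiniteKernel (κ i)] :
    Measurable fun a => Measure.pi fun i => κ i a := by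
  have h_box : ∀ t : ∀ i, Set (E i), (∀ i, MeasurableSet (t i)) →
      Measurable fun a => Measure.pi (fun i => κ i a) (univ.pi t) := fun t ht => by
    simp_rw [Measure.pi_pi]
    exact Finset.measurable_prod _ fun i _ => (κ i).measurable_coe (ht i)
  refine Measure.measurable_of_measurable_coe _ fun s hs => ?_
  refine MeasurableSpace.induction_on_inter (C := fun s _ => Measurable fun a =>
    Measure.pi (fun i => κ i a) s) generateFrom_pi.symm isPiSystem_pi (by simp) ?_ ?_ ?_ s hs
  · rintro _ ⟨t, ht, rfl⟩
    exact h_box t fun i => ht i (mem_univ i)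
  · intro t ht ih
    simp_rw [measure_compl ht (measure_ne_top _ _)]
    rw [← Set.pi_univ]
    exact (h_box _ fun _ => .univ).sub ih
  · intro t hdisj ht ih
    simp_rw [measure_iUnion hdisj ht]
    exact Measurable.tsum ih

noncomputable def pi (κ : ∀ i, Kernel α (E i)) [∀ i, IsFiniteKernel (κ i)] :
    Kernel α (∀ i, E i) :=
  ⟨fun a => Measure.pi fun i => κ i a, measurable_measure_pi κ⟩

lemma pi_apply (κ : ∀ i, Kernel α (E i)) [∀ i, IsFiniteKernel (κ i)] (a : α) :
    pi κ a = Measure.pi fun i => κ i a := rfl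

instance (κ : ∀ i, Kernel α (E i)) [∀ i, IsMarkovKernel (κ i)] : IsMarkovKernel (pi κ) :=
  ⟨fun a => by rw [pi_apply]; infer_instance⟩

end ProbabilityTheory.Kernel

def IsCondLaw {Ω β : Type*} {mΩ : MeasurableSpace Ω} [MeasurableSpace β]
    (m : MeasurableSpace Ω) (P : @Measure Ω mΩ) (U : Ω → β) (ν : Ω → Measure β) : Prop :=
  ∀ f : β → ℝ, Measurable f → (∃ M, ∀ y, |f y| ≤ M) →
    P[fun ω => f (U ω)|m] =ᵐ[P] fun ω => ∫ y, f y ∂ν ω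

section ConditionalLaw

variable {Ω α β : Type*} {m mΩ : MeasurableSpace Ω} [MeasurableSpace α] [MeasurableSpace β]
  {P : Measure Ω} [IsProbabilityMeasure P] {η : Kernel α β} [IsMarkovKernel η]
  {T : Ω → α} {U : Ω → β}

lemma IsCondLaw.map_prodMk_eq_compProd (hcond : IsCondLaw m P U fun ω => η (T ω))
    (hm : m ≤ mΩ) (hT : Measurable[m] T) (hU : Measurable U) :
    P.map (fun ω => (T ω, U ω)) = P.map T ⊗ₘ η := by
  have hT' : Measurable T := hT.mono hm le_rfl
  have : IsProbabilityMeasure (P.map T) := Measure.isProbabilityMeasure_map hT'.aemeasurable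
  have : IsProbabilityMeasure (P.map fun ω => (T ω, U ω)) :=
    Measure.isProbabilityMeasure_map (hT'.prodMk hU).aemeasurable
  refine ext_of_generate_finite _ generateFrom_prod.symm isPiSystem_prod ?_ (by simp)
  rintro _ ⟨s, hs, t, ht, rfl⟩
  have hs' : MeasurableSet[m] (T ⁻¹' s) := hT hs
  have h_cond := hcond (t.indicator 1) (measurable_const.indicator ht)
    ⟨1, fun y => by by_cases hy : y ∈ t <;> simp [hy]⟩
  have h_ind : (fun ω => t.indicator (1 : β → ℝ) (U ω)) = (U ⁻¹' t).indicator 1 := rfl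
  have h_real : P.real (T ⁻¹' s ∩ U ⁻¹' t) = ∫ ω in T ⁻¹' s, (η (T ω)).real t ∂P := calc
    P.real (T ⁻¹' s ∩ U ⁻¹' t) = ∫ ω in T ⁻¹' s, t.indicator 1 (U ω) ∂P := by
      rw [h_ind, integral_indicator_one (hU ht),
        measureReal_restrict_apply (hU ht), inter_comm]
    _ = ∫ ω in T ⁻¹' s, P[fun ω => t.indicator 1 (U ω)|m] ω ∂P := by
      refine (setIntegral_condExp hm ?_ hs').symm
      rw [h_ind]
      exact (integrable_const 1).indicator (hU ht)
    _ = ∫ ω in T ⁻¹' s, (η (T ω)).real t ∂P := by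
      refine setIntegral_congr_ae (hm _ hs') ?_
      filter_upwards [h_cond] with ω hω _
      rw [hω, integral_indicator_one ht]
  rw [Measure.map_apply (hT'.prodMk hU) (hs.prod ht), mk_preimage_prod,
    Measure.compProd_apply_prod hs ht, setLIntegral_map hs (η.measurable_coe ht) hT',
    ← ofReal_measureReal, h_real, ofReal_integral_eq_lintegral_ofReal]
  · simp
  · refine (integrable_const 1).mono'
      ((η.measurable_coe ht).comp hT').ennreal_toReal.aestronglyMeasurable (ae_of_all _ fun ω => ?_)
    rw [norm_of_nonneg measureReal_nonneg]
    exact measureReal_le_one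
  · exact ae_of_all _ fun ω => measureReal_nonneg

lemma IsCondLaw.integral_comp_prodMk (hcond : IsCondLaw m P U fun ω => η (T ω))
    (hm : m ≤ mΩ) (hT : Measurable[m] T) (hU : Measurable U)
    {G : α × β → ℝ} (hG : Measurable G) {M : ℝ} (hGM : ∀ z, |G z| ≤ M) :
    ∫ ω, G (T ω, U ω) ∂P = ∫ ω, ∫ y, G (T ω, y) ∂η (T ω) ∂P := by
  have hT' : Measurable T := hT.mono hm le_rfl
  have : IsProbabilityMeasure (P.map T) := Measure.isProbabilityMeasure_map hT'.aemeasurable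
  have hG_int : Integrable G (P.map T ⊗ₘ η) :=
    (integrable_const M).mono' hG.aestronglyMeasurable (ae_of_all _ hGM)
  rw [← integral_map (hT'.prodMk hU).aemeasurable hG.aestronglyMeasurable,
    hcond.map_prodMk_eq_compProd hm hT hU, Measure.integral_compProd hG_int,
    integral_map hT'.aemeasurable]
  exact (hG.stronglyMeasurable.integral_kernel_prod_right' (κ := η)).aestronglyMeasurable

end ConditionalLaw

namespace MeasureTheory

variable {α : Type*} {mα : MeasurableSpace α} {μ : Measure α} {f : α → ℝ}

lemma lpNorm_ofReal_eq_integral_abs_rpow {p : ℝ} (hp : 0 < p) (hf : AEStronglyMeasurable f μ) :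
    lpNorm f (ENNReal.ofReal p) μ = (∫ x, |f x| ^ p ∂μ) ^ (1 / p) := by
  rw [lpNorm_eq_integral_norm_rpow_toReal (by simpa using hp) ENNReal.ofReal_ne_top hf,
    ENNReal.toReal_ofReal hp.le, one_div]
  rfl

lemma lpNorm_le_lpNorm_of_exponent_le [IsProbabilityMeasure μ] {p q : ℝ≥0∞} (hpq : p ≤ q)
    (hf : MemLp f q μ) : lpNorm f p μ ≤ lpNorm f q μ := by
  rw [← toReal_eLpNorm hf.1, ← toReal_eLpNorm hf.1]
  exact ENNReal.toReal_mono hf.eLpNorm_ne_top (eLpNorm_le_eLpNorm_of_exponent_le hpq hf.1)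

lemma lpNorm_le_of_integral_pow_le [IsProbabilityMeasure μ] {k : ℕ} (hk : k ≠ 0)
    (hf : MemLp f (2 * k : ℕ) μ) {p : ℝ≥0∞} (hp : p ≤ (2 * k : ℕ)) {b : ℝ} (hb : 0 ≤ b)
    (h : ∫ x, f x ^ (2 * k) ∂μ ≤ b ^ (2 * k)) : lpNorm f p μ ≤ b := by
  refine (lpNorm_le_lpNorm_of_exponent_le hp hf).trans ?_
  have h2k : ((2 * k : ℕ) : ℝ) ≠ 0 := by positivity
  rw [lpNorm_eq_integral_norm_rpow_toReal (by simpa using hk) (ENNReal.natCast_ne_top _) hf.1,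
    ENNReal.toReal_natCast]
  simp_rw [rpow_natCast, norm_eq_abs, (even_two_mul k).pow_abs]
  calc (∫ x, f x ^ (2 * k) ∂μ) ^ ((2 * k : ℕ) : ℝ)⁻¹
      ≤ (b ^ (2 * k)) ^ ((2 * k : ℕ) : ℝ)⁻¹ :=
        rpow_le_rpow (integral_nonneg fun x => (even_two_mul k).pow_nonneg _) h (by positivity)
    _ = b := by rw [← rpow_natCast, ← rpow_mul hb, mul_inv_cancel₀ h2k, rpow_one]

end MeasureTheory

lemma pow_two_mul_le_factorial_mul_exp_add_exp (x : ℝ) (k : ℕ) :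
    x ^ (2 * k) ≤ (2 * k).factorial * (exp x + exp (-x)) := by
  have h_abs : exp |x| ≤ exp x + exp (-x) := by
    rcases abs_cases x with ⟨hx, -⟩ | ⟨hx, -⟩ <;> rw [hx] <;> linarith [exp_pos x, exp_pos (-x)]
  have h_fact := pow_div_factorial_le_exp |x| (abs_nonneg x) (2 * k)
  rw [div_le_iff₀ (by positivity), (even_two_mul k).pow_abs] at h_fact
  nlinarith [Nat.cast_nonneg (α := ℝ) (2 * k).factorial]

namespace ProbabilityTheory.HasSubgaussianMGF

variable {Ω : Type*} {mΩ : MeasurableSpace Ω} {μ : Measure Ω} [IsProbabilityMeasure μ]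
  {X : Ω → ℝ} {c : ℝ≥0}

lemma integral_pow_two_mul_le (h : HasSubgaussianMGF X c μ) (k : ℕ) :
    ∫ ω, X ω ^ (2 * k) ∂μ ≤ 2 * exp (1 / 2) * (2 * k).factorial * c ^ k := by
  rcases eq_or_ne c 0 with rfl | hc
  · have h_zero : (fun ω => X ω ^ (2 * k)) =ᵐ[μ] fun _ => (0 : ℝ) ^ (2 * k) :=
      h.ae_eq_zero_of_hasSubgaussianMGF_zero.mono fun ω hω => by simp only [hω, Pi.zero_apply]
    rw [integral_congr_ae h_zero, integral_const, probReal_univ, one_smul]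
    rcases k with _ | k
    · norm_num
      linarith [add_one_le_exp (1 / 2 : ℝ)]
    · simp
  -- Choosing `t = c^{-1/2}` in `mgf X μ (±t) ≤ exp (c t² / 2)` makes the exponent `1/2`.
  set t : ℝ := (√(c : ℝ))⁻¹
  have hct : (c : ℝ) * t ^ 2 = 1 := by
    rw [inv_pow, sq_sqrt c.coe_nonneg, mul_inv_cancel₀ (NNReal.coe_ne_zero.2 hc)]
  have h_scale : ∀ ω, X ω ^ (2 * k) = (c : ℝ) ^ k * (t * X ω) ^ (2 * k) := fun ω => by
    rw [mul_pow, pow_mul t, ← mul_assoc, ← mul_pow, hct, one_pow, one_mul]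
  have h_int : ∀ s : ℝ, Integrable (fun ω => exp (s * X ω)) μ := h.integrable_exp_mul
  calc ∫ ω, X ω ^ (2 * k) ∂μ = (c : ℝ) ^ k * ∫ ω, (t * X ω) ^ (2 * k) ∂μ := by
        simp_rw [h_scale, integral_const_mul]
    _ ≤ (c : ℝ) ^ k * ((2 * k).factorial * (mgf X μ t + mgf X μ (-t))) := by
        gcongr
        rw [mgf, mgf, ← integral_add (h_int t) (h_int (-t)), ← integral_const_mul]
        refine integral_mono_of_nonneg (ae_of_all _ fun ω => (even_two_mul k).pow_nonneg _)
          (((h_int t).add (h_int (-t))).const_mul _) (ae_of_all _ fun ω => ?_)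
        simpa [neg_mul] using pow_two_mul_le_factorial_mul_exp_add_exp (t * X ω) k
    _ ≤ (c : ℝ) ^ k * ((2 * k).factorial * (exp (c * t ^ 2 / 2) + exp (c * (-t) ^ 2 / 2))) := by
        gcongr
        exacts [h.mgf_le t, h.mgf_le (-t)]
    _ = 2 * exp (1 / 2) * (2 * k).factorial * c ^ k := by
        rw [neg_sq, hct]
        ring

end ProbabilityTheory.HasSubgaussianMGF

lemma ProbabilityTheory.hasSubgaussianMGF_sum_pi {ι : Type*} [Fintype ι] {E : ι → Type*}
    [∀ i, MeasurableSpace (E i)] (μ : ∀ i, Measure (E i)) [∀ i, IsProbabilityMeasure (μ i)]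
    {f : ∀ i, E i → ℝ} (hf : ∀ i, Measurable (f i)) {a b : ℝ} (hab : ∀ i x, f i x ∈ Icc a b) :
    HasSubgaussianMGF (fun y => ∑ i, (f i (y i) - ∫ x, f i x ∂μ i))
      (Fintype.card ι * (‖b - a‖₊ / 2) ^ 2) (Measure.pi μ) := by
  have h_indep := iIndepFun_pi (μ := μ) fun i => ((hf i).sub_const (∫ x, f i x ∂μ i)).aemeasurable
  have h_sum := HasSubgaussianMGF.sum_of_iIndepFun h_indep (s := Finset.univ)
    (c := fun _ => (‖b - a‖₊ / 2) ^ 2) fun i _ => by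
      refine HasSubgaussianMGF.of_map (Y := fun y : ∀ i, E i => y i)
        (X := fun x => f i x - ∫ x, f i x ∂μ i) (measurable_pi_apply i).aemeasurable ?_
      rw [(measurePreserving_eval μ i).map_eq]
      exact hasSubgaussianMGF_of_mem_Icc (hf i).aemeasurable (ae_of_all _ (hab i))
  simpa [Finset.sum_const, nsmul_eq_mul] using h_sum

lemma abs_inv_card_mul_sum_le {ι : Type*} [Fintype ι] [Nonempty ι] {f : ι → ℝ} {M : ℝ}
    (hf : ∀ i, |f i| ≤ M) :
    |(Fintype.card ι : ℝ)⁻¹ * ∑ i, f i| ≤ M := by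
  have h_card : (0 : ℝ) < Fintype.card ι := by exact_mod_cast Fintype.card_pos
  rw [abs_mul, abs_inv, Nat.abs_cast, inv_mul_le_iff₀ h_card]
  calc |∑ i, f i| ≤ ∑ i, |f i| := Finset.abs_sum_le_sum_abs _ _
    _ ≤ ∑ _i : ι, M := Finset.sum_le_sum fun i _ => hf i
    _ = Fintype.card ι * M := by simp

lemma abs_integral_le_of_abs_le_s7 {β : Type*} [MeasurableSpace β] {ν : Measure β}
    [IsProbabilityMeasure ν] {f : β → ℝ} {M : ℝ} (hf : ∀ x, |f x| ≤ M) :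
    |∫ x, f x ∂ν| ≤ M := by
  simpa using norm_integral_le_of_norm_le_const (μ := ν) (f := f)
    (ae_of_all _ fun x => by rw [norm_eq_abs]; exact hf x)

section Mutation

variable {Ω ι E₁ E₂ : Type*} {m mΩ : MeasurableSpace Ω} [Fintype ι]
  [MeasurableSpace E₁] [MeasurableSpace E₂] {κ : Kernel E₁ E₂} [IsMarkovKernel κ]
  {φ : E₁ × E₂ → ℝ} {M : ℝ} {P : Measure Ω} [IsProbabilityMeasure P]
  {T : Ω → ι → E₁} {U : Ω → ι → E₂}

variable (κ φ) in
noncomputable def mutationError (x : ι → E₁) (y : ι → E₂) : ℝ :=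
  (Fintype.card ι : ℝ)⁻¹ * ∑ i, (φ (x i, y i) - ∫ u, φ (x i, u) ∂κ (x i))

lemma abs_mutationError_le [Nonempty ι] (hφM : ∀ z, |φ z| ≤ M) (x : ι → E₁) (y : ι → E₂) :
    |mutationError κ φ x y| ≤ 2 * M :=
  abs_inv_card_mul_sum_le fun i => (abs_sub _ _).trans
    (by linarith [hφM (x i, y i), abs_integral_le_of_abs_le_s7 (ν := κ (x i)) fun u => hφM (x i, u)])

lemma measurable_mutationError (hφ : Measurable φ) :
    Measurable fun q : (ι → E₁) × (ι → E₂) => mutationError κ φ q.1 q.2 := by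
  have hψ : Measurable fun x => ∫ u, φ (x, u) ∂κ x :=
    (hφ.stronglyMeasurable.integral_kernel_prod_right' (κ := κ)).measurable
  refine measurable_const.mul (Finset.measurable_sum _ fun i _ => ?_)
  exact (hφ.comp (measurable_fst.eval.prodMk measurable_snd.eval)).sub (hψ.comp measurable_fst.eval)

lemma integral_mutationError_pow_le (hφ : Measurable φ) (hφM : ∀ z, |φ z| ≤ M) (x : ι → E₁)
    (k : ℕ) :
    ∫ y, mutationError κ φ x y ^ (2 * k) ∂(Measure.pi fun i => κ (x i))
      ≤ 2 * exp (1 / 2) * (2 * k).factorial * (M ^ 2 / Fintype.card ι) ^ k := by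
  have h_sum := hasSubgaussianMGF_sum_pi (fun i => κ (x i))
    (f := fun i u => φ (x i, u)) (fun i => hφ.comp measurable_prodMk_left) (a := -M) (b := M)
    fun i u => abs_le.1 (hφM (x i, u))
  have h_half : ((‖M - -M‖₊ / 2 : ℝ≥0) : ℝ) = |M| := by
    rw [NNReal.coe_div, coe_nnnorm, norm_eq_abs, sub_neg_eq_add, ← two_mul, abs_mul, abs_two]
    simp
  refine ((h_sum.const_mul (Fintype.card ι : ℝ)⁻¹).integral_pow_two_mul_le k).trans_eq ?_
  -- the variance proxy of `N⁻¹ ∑ᵢ` is `N⁻² · N · M² = M² / N`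
  congr 2
  change (Fintype.card ι : ℝ)⁻¹ ^ 2 * (Fintype.card ι * ((‖M - -M‖₊ / 2 : ℝ≥0) : ℝ) ^ 2) = _
  rw [h_half, sq_abs]
  rcases eq_or_ne (Fintype.card ι : ℝ) 0 with h | h
  · simp [h]
  · field_simp

lemma memLp_mutationError [Nonempty ι] (hT : Measurable T) (hU : Measurable U) (hφ : Measurable φ)
    (hφM : ∀ z, |φ z| ≤ M) (p : ℝ≥0∞) :
    MemLp (fun ω => mutationError κ φ (T ω) (U ω)) p P :=
  memLp_of_bounded (a := -(2 * M)) (b := 2 * M)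
    (ae_of_all _ fun _ => abs_le.1 (abs_mutationError_le hφM _ _))
    ((measurable_mutationError hφ).comp (hT.prodMk hU)).aestronglyMeasurable p

lemma lpNorm_mutationError_le [Nonempty ι]
    (hcond : IsCondLaw m P U fun ω => Measure.pi fun i => κ (T ω i))
    (hm : m ≤ mΩ) (hT : Measurable[m] T) (hU : Measurable U)
    (hφ : Measurable φ) (hφM : ∀ z, |φ z| ≤ M) {k : ℕ} (hk : k ≠ 0) {p : ℝ≥0∞}
    (hp : p ≤ (2 * k : ℕ)) :
    lpNorm (fun ω => mutationError κ φ (T ω) (U ω)) p P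
      ≤ (2 * exp (1 / 2) * (2 * k).factorial) ^ (1 / (2 * k : ℝ)) * M
        / √(Fintype.card ι) := by
  obtain ⟨ω₀⟩ := nonempty_of_isProbabilityMeasure P
  obtain ⟨i₀⟩ := ‹Nonempty ι›
  have hM : 0 ≤ M := (abs_nonneg _).trans (hφM (T ω₀ i₀, U ω₀ i₀))
  have hG := measurable_mutationError (ι := ι) (κ := κ) hφ
  set K : ℝ := 2 * exp (1 / 2) * (2 * k).factorial
  have hK : 0 ≤ K := by positivity
  refine lpNorm_le_of_integral_pow_le hk ?_ hp (by positivity) ?_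
  · exact memLp_mutationError (hT.mono hm le_rfl) hU hφ hφM _
  have h_pow : (K ^ (1 / (2 * k : ℝ)) * M / √(Fintype.card ι)) ^ (2 * k)
      = K * (M ^ 2 / Fintype.card ι) ^ k := by
    rw [div_pow, mul_pow, ← rpow_natCast (K ^ _), ← rpow_mul hK, pow_mul M, pow_mul √_,
      sq_sqrt (Nat.cast_nonneg _), mul_div_assoc, ← div_pow]
    push_cast
    rw [one_div_mul_cancel (by positivity), rpow_one]
  rw [h_pow]
  calc ∫ ω, mutationError κ φ (T ω) (U ω) ^ (2 * k) ∂P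
      = ∫ ω, ∫ y, mutationError κ φ (T ω) y ^ (2 * k)
          ∂(Kernel.pi fun i => κ.comap (· i) (measurable_pi_apply i)) (T ω) ∂P :=
        hcond.integral_comp_prodMk hm hT hU (hG.pow_const _)
          (M := (2 * M) ^ (2 * k)) fun q => by
            rw [abs_pow]
            exact pow_le_pow_left₀ (abs_nonneg _) (abs_mutationError_le hφM _ _) _
    _ ≤ ∫ _ω, K * (M ^ 2 / Fintype.card ι) ^ k ∂P :=
        integral_mono_of_nonneg (ae_of_all _ fun ω => integral_nonneg fun y =>
          (even_two_mul k).pow_nonneg _) (integrable_const _)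
          (ae_of_all _ fun ω => integral_mutationError_pow_le hφ hφM (T ω) k)
    _ = K * (M ^ 2 / Fintype.card ι) ^ k := by simp

lemma sub_integral_compProd_eq_mutationError_add (μ : Measure E₁) [IsProbabilityMeasure μ]
    (hφ : Measurable φ) (hφM : ∀ z, |φ z| ≤ M) (x : ι → E₁) (y : ι → E₂) :
    (Fintype.card ι : ℝ)⁻¹ * ∑ i, φ (x i, y i) - ∫ z, φ z ∂(μ ⊗ₘ κ)
      = mutationError κ φ x y + ((Fintype.card ι : ℝ)⁻¹ * ∑ i, ∫ u, φ (x i, u) ∂κ (x i)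
        - ∫ x, ∫ u, φ (x, u) ∂κ x ∂μ) := by
  rw [Measure.integral_compProd
    ((integrable_const M).mono' hφ.aestronglyMeasurable (ae_of_all _ hφM))]
  simp only [mutationError, Finset.sum_sub_distrib]
  ring

lemma lpNorm_empiricalError_le [Nonempty ι] (μ : Measure E₁) [IsProbabilityMeasure μ]
    (hcond : IsCondLaw m P U fun ω => Measure.pi fun i => κ (T ω i))
    (hm : m ≤ mΩ) (hT : Measurable[m] T) (hU : Measurable U)
    (hφ : Measurable φ) (hφM : ∀ z, |φ z| ≤ M) {k : ℕ} (hk : k ≠ 0) {p : ℝ≥0∞}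
    (hp₁ : 1 ≤ p) (hp : p ≤ (2 * k : ℕ)) :
    lpNorm (fun ω => (Fintype.card ι : ℝ)⁻¹ * ∑ i, φ (T ω i, U ω i) - ∫ z, φ z ∂(μ ⊗ₘ κ)) p P
      ≤ (2 * exp (1 / 2) * (2 * k).factorial) ^ (1 / (2 * k : ℝ)) * M / √(Fintype.card ι)
        + lpNorm (fun ω => (Fintype.card ι : ℝ)⁻¹ * ∑ i, ∫ u, φ (T ω i, u) ∂κ (T ω i)
          - ∫ x, ∫ u, φ (x, u) ∂κ x ∂μ) p P := by
  simp_rw [sub_integral_compProd_eq_mutationError_add μ hφ hφM]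
  refine (lpNorm_add_le (memLp_mutationError (hT.mono hm le_rfl) hU hφ hφM p) hp₁).trans ?_
  gcongr
  exact lpNorm_mutationError_le hcond hm hT hU hφ hφM hk hp

end Mutation

/-- Mutation step preserves `L^p` inequalities: if the empirical measures `ε^N` of the resampled
particles `X` approximate `π₋` at `L^p` rate `C‖ψ‖/√N`, and conditionally each `Yⁿ` is drawn
independently from the Markov kernel `K(Xⁿ,·)`, then the empirical measures of the pairs
`(Xⁿ,Yⁿ)` approximate `π = π₋ ⊗ K` at the same `L^p` rate (with a new constant `C'`). -/
theorem stmt7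
    {Ω : Type*} [mΩ : MeasurableSpace Ω] (P : Measure Ω) [IsProbabilityMeasure P]
    {E₁ E₂ : Type*} [MeasurableSpace E₁] [MeasurableSpace E₂]
    (πm : Measure E₁) [IsProbabilityMeasure πm]
    (κ : Kernel E₁ E₂) [IsMarkovKernel κ]
    (X : (N : ℕ) → Fin N → Ω → E₁) (Y : (N : ℕ) → Fin N → Ω → E₂)
    (𝒢 : ℕ → MeasurableSpace Ω)
    (h𝒢 : ∀ N, 𝒢 N ≤ mΩ)
    (hXmeas : ∀ N n, Measurable[𝒢 N] (X N n))
    (hYmeas : ∀ N n, Measurable (Y N n))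
    (hcond : ∀ N : ℕ, ∀ f : (Fin N → E₂) → ℝ, Measurable f → (∃ M, ∀ y, |f y| ≤ M) →
      (P[(fun ω => f (fun n => Y N n ω))|𝒢 N])
        =ᵐ[P] fun ω => ∫ y, f y ∂(Measure.pi fun n : Fin N => κ (X N n ω)))
    (p C : ℝ) (hp : 1 ≤ p)
    (hLp : ∀ N : ℕ, 0 < N → ∀ ψ : E₁ → ℝ, Measurable ψ → ∀ M : ℝ, (∀ x, |ψ x| ≤ M) →
      (∫ ω, |(N : ℝ)⁻¹ * (∑ n : Fin N, ψ (X N n ω)) - ∫ x, ψ x ∂πm| ^ p ∂P) ^ (1 / p)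
        ≤ C * M / Real.sqrt N) :
    ∃ C' : ℝ, ∀ N : ℕ, 0 < N → ∀ φ : E₁ × E₂ → ℝ, Measurable φ →
      ∀ M : ℝ, (∀ x, |φ x| ≤ M) →
      (∫ ω, |(N : ℝ)⁻¹ * (∑ n : Fin N, φ (X N n ω, Y N n ω))
          - ∫ z, φ z ∂(πm.compProd κ)| ^ p ∂P) ^ (1 / p)
        ≤ C' * M / Real.sqrt N := by
  have hp₀ : 0 < p := by linarith
  obtain ⟨k, hk, hpk⟩ : ∃ k : ℕ, k ≠ 0 ∧ ENNReal.ofReal p ≤ (2 * k : ℕ) := by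
    refine ⟨⌈p⌉₊, by positivity, ?_⟩
    rw [← ENNReal.ofReal_natCast]
    exact ENNReal.ofReal_le_ofReal (by push_cast; linarith [Nat.le_ceil p])
  refine ⟨C + (2 * exp (1 / 2) * (2 * k).factorial) ^ (1 / (2 * k : ℝ)),
    fun N hN φ hφ M hM => ?_⟩
  have : Nonempty (Fin N) := ⟨⟨0, hN⟩⟩
  have hX : ∀ n, Measurable (X N n) := fun n => (hXmeas N n).mono (h𝒢 N) le_rfl
  set ψ : E₁ → ℝ := fun x => ∫ u, φ (x, u) ∂κ x
  have hψ : Measurable ψ := (hφ.stronglyMeasurable.integral_kernel_prod_right' (κ := κ)).measurable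
  have h_selection := (lpNorm_ofReal_eq_integral_abs_rpow hp₀
    (Measurable.aestronglyMeasurable (by fun_prop))).trans_le
    (hLp N hN ψ hψ M fun x => abs_integral_le_of_abs_le_s7 fun u => hM (x, u))
  have h_total := lpNorm_empiricalError_le πm (hcond N) (h𝒢 N)
    (@measurable_pi_lambda Ω (Fin N) (fun _ => E₁) (𝒢 N) _ _ (hXmeas N))
    (measurable_pi_lambda _ (hYmeas N)) hφ hM hk (ENNReal.one_le_ofReal.2 hp) hpk
  simp only [Fintype.card_fin] at h_total
  rw [← lpNorm_ofReal_eq_integral_abs_rpow hp₀ (Measurable.aestronglyMeasurable (by fun_prop))]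
  calc _ ≤ _ := h_total
    _ ≤ _ := add_le_add le_rfl h_selection
    _ = _ := by ring
end

section
/- Let μ₁ and μ₂ be probability measures on (S₁,𝒮₁) and (S₂,𝒮₂), let (X₁ⁿ)_{n≤N} be i.i.d. from μ₁ and (X₂ⁿ)_{n≤N} i.i.d. from μ₂, with the two collections independent, and let μ_k^N denote the respective empirical measures. Then there is a constant C, independent of N and φ, such that E[((μ₁^N − μ₁) × (μ₂^N − μ₂)(φ))²]^{1/2} ≤ C‖φ‖/N for all N > 0 and all bounded measurable φ on S₁ × S₂. -/
/-!
With `ψ a b := (δ_a − μ₁) × (δ_b − μ₂)(φ)`, the product error equals `N⁻² ∑_{i,j} ψ(X₁ⁱ, X₂ʲ)`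
exactly. The kernel `ψ` is bounded by `4M` and integrates to zero in each variable separately, so
by independence and Fubini the `N²` terms are orthogonal in `L²(P)`: the second moment of the sum
is at most `N² (4M)²`, and the root mean square error is at most `4M / N`.
-/

open MeasureTheory

theorem abs_integral_le_of_forall_abs_le {α : Type*} [MeasurableSpace α] {μ : Measure α}
    [IsProbabilityMeasure μ] {f : α → ℝ} {M : ℝ} (hf : ∀ x, |f x| ≤ M) :
    |∫ x, f x ∂μ| ≤ M := by
  simpa using norm_integral_le_of_norm_le_const (μ := μ) (f := f) (.of_forall hf)

theorem integrable_of_forall_abs_le {α : Type*} [MeasurableSpace α] {μ : Measure α}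
    [IsFiniteMeasure μ] {f : α → ℝ} (hfm : Measurable f) {M : ℝ} (hf : ∀ x, |f x| ≤ M) :
    Integrable f μ :=
  .of_bound hfm.aestronglyMeasurable M (.of_forall hf)

theorem integral_comp_eval_mul_comp_eval {ι S : Type*} [Fintype ι] [MeasurableSpace S]
    (μ : Measure S) [IsProbabilityMeasure μ] {i i' : ι} (hi : i ≠ i') (f g : S → ℝ) :
    ∫ x, f (x i) * g (x i') ∂Measure.pi (fun _ : ι => μ) = (∫ a, f a ∂μ) * ∫ a, g a ∂μ := by
  classical
  let h : ι → S → ℝ := fun k => if k = i then f else if k = i' then g else 1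
  have hother : ∀ k, k ≠ i ∧ k ≠ i' → h k = 1 := fun k hk => by simp [h, hk.1, hk.2]
  calc ∫ x, f (x i) * g (x i') ∂Measure.pi (fun _ : ι => μ)
      = ∫ x, ∏ k, h k (x k) ∂Measure.pi (fun _ : ι => μ) := by
        congr with x
        rw [Fintype.prod_eq_mul i i' hi fun k hk => by rw [hother k hk]; rfl]
        simp [h, hi.symm]
    _ = ∏ k, ∫ a, h k a ∂μ := integral_fintype_prod_eq_prod _
    _ = (∫ a, f a ∂μ) * ∫ a, g a ∂μ := by
        rw [Fintype.prod_eq_mul i i' hi fun k hk => by simp [hother k hk]]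
        simp [h, hi.symm]

theorem integral_sq_sum_of_pairwise_integral_mul_eq_zero {α ι : Type*} [MeasurableSpace α]
    {μ : Measure α} [Fintype ι] {f : ι → α → ℝ}
    (hint : ∀ k l, Integrable (fun x => f k x * f l x) μ)
    (horth : Pairwise fun k l => ∫ x, f k x * f l x ∂μ = 0) :
    ∫ x, (∑ k, f k x) ^ 2 ∂μ = ∑ k, ∫ x, f k x ^ 2 ∂μ := by
  classical
  simp_rw [sq, Finset.sum_mul_sum]
  rw [integral_finsetSum _ fun k _ => integrable_finsetSum _ fun l _ => hint k l]
  refine Finset.sum_congr rfl fun k _ => ?_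
  rw [integral_finsetSum _ fun l _ => hint k l,
    Finset.sum_eq_single k (fun l _ hlk => horth hlk.symm) (by simp)]

section Degenerate

variable {ι κ S₁ S₂ : Type*} [Fintype ι] [Fintype κ] [MeasurableSpace S₁] [MeasurableSpace S₂]
  {μ₁ : Measure S₁} {μ₂ : Measure S₂} [IsProbabilityMeasure μ₁] [IsProbabilityMeasure μ₂]
  {ψ : S₁ → S₂ → ℝ}

theorem integral_kernel_mul_eq_zero_of_ne_left (hψ : ∀ b, ∫ a, ψ a b ∂μ₁ = 0)
    {i i' : ι} (hi : i ≠ i') (j j' : κ) :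
    ∫ p, ψ (p.1 i) (p.2 j) * ψ (p.1 i') (p.2 j')
      ∂(Measure.pi fun _ => μ₁).prod (Measure.pi fun _ => μ₂) = 0 := by
  -- a non-integrable integrand has integral `0` by convention, so Fubini is only needed otherwise
  by_cases hint : Integrable
    (fun p : (ι → S₁) × (κ → S₂) => ψ (p.1 i) (p.2 j) * ψ (p.1 i') (p.2 j'))
    ((Measure.pi fun _ => μ₁).prod (Measure.pi fun _ => μ₂))
  · rw [integral_prod_symm _ hint]
    refine integral_eq_zero_of_ae (.of_forall fun y => ?_)
    dsimp only [Pi.zero_apply]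
    rw [integral_comp_eval_mul_comp_eval μ₁ hi (ψ · (y j)) (ψ · (y j')), hψ, zero_mul]
  · exact integral_undef hint

theorem integral_kernel_mul_eq_zero_of_ne_right (hψ : ∀ a, ∫ b, ψ a b ∂μ₂ = 0)
    (i i' : ι) {j j' : κ} (hj : j ≠ j') :
    ∫ p, ψ (p.1 i) (p.2 j) * ψ (p.1 i') (p.2 j')
      ∂(Measure.pi fun _ => μ₁).prod (Measure.pi fun _ => μ₂) = 0 := by
  by_cases hint : Integrable
    (fun p : (ι → S₁) × (κ → S₂) => ψ (p.1 i) (p.2 j) * ψ (p.1 i') (p.2 j'))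
    ((Measure.pi fun _ => μ₁).prod (Measure.pi fun _ => μ₂))
  · rw [integral_prod _ hint]
    refine integral_eq_zero_of_ae (.of_forall fun x => ?_)
    dsimp only [Pi.zero_apply]
    rw [integral_comp_eval_mul_comp_eval μ₂ hj (ψ (x i)) (ψ (x i')), hψ, zero_mul]
  · exact integral_undef hint

theorem integral_sq_sum_le_of_degenerate (hψm : Measurable (Function.uncurry ψ)) {K : ℝ}
    (hψK : ∀ a b, |ψ a b| ≤ K) (hψ₁ : ∀ b, ∫ a, ψ a b ∂μ₁ = 0) (hψ₂ : ∀ a, ∫ b, ψ a b ∂μ₂ = 0) :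
    ∫ p, (∑ i, ∑ j, ψ (p.1 i) (p.2 j)) ^ 2
        ∂(Measure.pi fun _ : ι => μ₁).prod (Measure.pi fun _ : κ => μ₂)
      ≤ Fintype.card ι * Fintype.card κ * K ^ 2 := by
  set π := (Measure.pi fun _ : ι => μ₁).prod (Measure.pi fun _ : κ => μ₂)
  let f : ι × κ → (ι → S₁) × (κ → S₂) → ℝ := fun k p => ψ (p.1 k.1) (p.2 k.2)
  have hfm : ∀ k, Measurable (f k) := fun k => by fun_prop
  have hsq : ∀ k p, f k p ^ 2 ≤ K ^ 2 := fun k p =>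
    sq_le_sq' (abs_le.mp (hψK _ _)).1 (abs_le.mp (hψK _ _)).2
  have hint : ∀ k l, Integrable (fun p => f k p * f l p) π := fun k l =>
    integrable_of_forall_abs_le ((hfm k).mul (hfm l)) (M := K * K) fun p => by
      rw [abs_mul]
      exact mul_le_mul (hψK _ _) (hψK _ _) (abs_nonneg _)
        ((abs_nonneg _).trans (hψK (p.1 k.1) (p.2 k.2)))
  have horth : Pairwise fun k l => ∫ p, f k p * f l p ∂π = 0 := by
    rintro ⟨i, j⟩ ⟨i', j'⟩ hne
    by_cases hi : i = i'
    · subst hi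
      exact integral_kernel_mul_eq_zero_of_ne_right hψ₂ i i (by simpa using hne)
    · exact integral_kernel_mul_eq_zero_of_ne_left hψ₁ hi j j'
  calc ∫ p, (∑ i, ∑ j, ψ (p.1 i) (p.2 j)) ^ 2 ∂π
      = ∑ k, ∫ p, f k p ^ 2 ∂π := by
        simp_rw [← Fintype.sum_prod_type']
        exact integral_sq_sum_of_pairwise_integral_mul_eq_zero hint horth
    _ ≤ ∑ _k : ι × κ, K ^ 2 := Finset.sum_le_sum fun k _ => by
        simpa using integral_mono ((hint k k).congr (.of_forall fun p => (sq (f k p)).symm))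
          (integrable_const (K ^ 2)) (hsq k)
    _ = Fintype.card ι * Fintype.card κ * K ^ 2 := by simp

end Degenerate

section DoubleCentering

variable {S₁ S₂ : Type*} [MeasurableSpace S₁] [MeasurableSpace S₂]
  (μ₁ : Measure S₁) (μ₂ : Measure S₂)

/-- `(δ_a − μ₁) × (δ_b − μ₂)(φ)`. -/
noncomputable def doubleCentering (φ : S₁ × S₂ → ℝ) (a : S₁) (b : S₂) : ℝ :=
  φ (a, b) - ∫ y, φ (a, y) ∂μ₂ - ∫ x, φ (x, b) ∂μ₁ + ∫ x, ∫ y, φ (x, y) ∂μ₂ ∂μ₁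

theorem empirical_product_error_eq_mean_doubleCentering (φ : S₁ × S₂ → ℝ) {N : ℕ} (hN : N ≠ 0)
    (x : Fin N → S₁) (y : Fin N → S₂) :
    ((N : ℝ) ^ 2)⁻¹ * (∑ i, ∑ j, φ (x i, y j)) - (N : ℝ)⁻¹ * (∑ i, ∫ b, φ (x i, b) ∂μ₂)
        - (N : ℝ)⁻¹ * (∑ j, ∫ a, φ (a, y j) ∂μ₁) + ∫ a, ∫ b, φ (a, b) ∂μ₂ ∂μ₁
      = ((N : ℝ) ^ 2)⁻¹ * ∑ i, ∑ j, doubleCentering μ₁ μ₂ φ (x i) (y j) := by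
  simp only [doubleCentering, Finset.sum_add_distrib, Finset.sum_sub_distrib, Finset.sum_const,
    Finset.card_univ, Fintype.card_fin, nsmul_eq_mul, ← Finset.mul_sum]
  field_simp

variable [IsProbabilityMeasure μ₁] [IsProbabilityMeasure μ₂] {φ : S₁ × S₂ → ℝ} {M : ℝ}

theorem measurable_uncurry_doubleCentering (hφ : Measurable φ) :
    Measurable (Function.uncurry (doubleCentering μ₁ μ₂ φ)) :=
  have h₂ : Measurable fun x => ∫ y, φ (x, y) ∂μ₂ :=
    hφ.stronglyMeasurable.integral_prod_right'.measurable
  have h₁ : Measurable fun y => ∫ x, φ (x, y) ∂μ₁ :=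
    hφ.stronglyMeasurable.integral_prod_left'.measurable
  ((hφ.sub (h₂.comp measurable_fst)).sub (h₁.comp measurable_snd)).add_const _

theorem abs_doubleCentering_le (hM : ∀ x, |φ x| ≤ M) (a : S₁) (b : S₂) :
    |doubleCentering μ₁ μ₂ φ a b| ≤ 4 * M := by
  have h₂ : ∀ x, |∫ y, φ (x, y) ∂μ₂| ≤ M := fun x =>
    abs_integral_le_of_forall_abs_le fun y => hM _
  have h₁ : ∀ y, |∫ x, φ (x, y) ∂μ₁| ≤ M := fun y =>
    abs_integral_le_of_forall_abs_le fun x => hM _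
  have h₀ : |∫ x, ∫ y, φ (x, y) ∂μ₂ ∂μ₁| ≤ M := abs_integral_le_of_forall_abs_le h₂
  obtain ⟨hφl, hφu⟩ := abs_le.mp (hM (a, b))
  obtain ⟨h₂l, h₂u⟩ := abs_le.mp (h₂ a)
  obtain ⟨h₁l, h₁u⟩ := abs_le.mp (h₁ b)
  obtain ⟨h₀l, h₀u⟩ := abs_le.mp h₀
  rw [doubleCentering, abs_le]
  constructor <;> linarith

theorem integral_doubleCentering_left (hφ : Measurable φ) (hM : ∀ x, |φ x| ≤ M) (b : S₂) :
    ∫ a, doubleCentering μ₁ μ₂ φ a b ∂μ₁ = 0 := by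
  have hsec : Integrable (fun a => φ (a, b)) μ₁ :=
    integrable_of_forall_abs_le (by fun_prop) fun a => hM _
  have hmarg : Integrable (fun a => ∫ y, φ (a, y) ∂μ₂) μ₁ :=
    integrable_of_forall_abs_le hφ.stronglyMeasurable.integral_prod_right'.measurable
      fun a => abs_integral_le_of_forall_abs_le fun y => hM _
  unfold doubleCentering
  rw [integral_add ?_ (integrable_const _), integral_sub ?_ (integrable_const _),
    integral_sub hsec hmarg]
  · simp
  · exact hsec.sub hmarg
  · exact (hsec.sub hmarg).sub (integrable_const _)

theorem integral_doubleCentering_right (hφ : Measurable φ) (hM : ∀ x, |φ x| ≤ M) (a : S₁) :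
    ∫ b, doubleCentering μ₁ μ₂ φ a b ∂μ₂ = 0 := by
  have hsec : Integrable (fun b => φ (a, b)) μ₂ :=
    integrable_of_forall_abs_le (by fun_prop) fun b => hM _
  have hmarg : Integrable (fun b => ∫ x, φ (x, b) ∂μ₁) μ₂ :=
    integrable_of_forall_abs_le hφ.stronglyMeasurable.integral_prod_left'.measurable
      fun b => abs_integral_le_of_forall_abs_le fun x => hM _
  have hswap : ∫ b, ∫ x, φ (x, b) ∂μ₁ ∂μ₂ = ∫ x, ∫ y, φ (x, y) ∂μ₂ ∂μ₁ :=
    integral_integral_swap (f := fun x y => φ (x, y)) (integrable_of_forall_abs_le hφ hM) |>.symm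
  unfold doubleCentering
  rw [integral_add ?_ (integrable_const _), integral_sub ?_ hmarg,
    integral_sub hsec (integrable_const _), hswap]
  · simp
  · exact hsec.sub (integrable_const _)
  · exact (hsec.sub (integrable_const _)).sub hmarg

end DoubleCentering

theorem stmt8_general
    {Ω : Type*} [MeasurableSpace Ω] (P : Measure Ω)
    {S₁ S₂ : Type*} [MeasurableSpace S₁] [MeasurableSpace S₂]
    (μ₁ : Measure S₁) (μ₂ : Measure S₂)
    [IsProbabilityMeasure μ₁] [IsProbabilityMeasure μ₂] :
    ∃ C : ℝ, ∀ N : ℕ, 0 < N →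
      ∀ (X₁ : Fin N → Ω → S₁) (X₂ : Fin N → Ω → S₂),
      (∀ n, Measurable (X₁ n)) → (∀ n, Measurable (X₂ n)) →
      Measure.map (fun ω => ((fun n => X₁ n ω), (fun n => X₂ n ω))) P
        = (Measure.pi fun _ : Fin N => μ₁).prod (Measure.pi fun _ : Fin N => μ₂) →
      ∀ φ : S₁ × S₂ → ℝ, Measurable φ → ∀ M : ℝ, (∀ x, |φ x| ≤ M) →
      (∫ ω, (((N : ℝ)^2)⁻¹ * (∑ i : Fin N, ∑ j : Fin N, φ (X₁ i ω, X₂ j ω))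
          - (N : ℝ)⁻¹ * (∑ i : Fin N, ∫ y, φ (X₁ i ω, y) ∂μ₂)
          - (N : ℝ)⁻¹ * (∑ j : Fin N, ∫ x, φ (x, X₂ j ω) ∂μ₁)
          + ∫ x, ∫ y, φ (x, y) ∂μ₂ ∂μ₁) ^ 2 ∂P) ^ ((1 : ℝ) / 2)
        ≤ C * M / N := by
  refine ⟨4, fun N hN X₁ X₂ hX₁ hX₂ hlaw φ hφ M hM => ?_⟩
  obtain ⟨a⟩ := nonempty_of_isProbabilityMeasure μ₁
  obtain ⟨b⟩ := nonempty_of_isProbabilityMeasure μ₂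
  have hM₀ : 0 ≤ M := (abs_nonneg _).trans (hM (a, b))
  set ψ := doubleCentering μ₁ μ₂ φ
  have hψm : Measurable (Function.uncurry ψ) := measurable_uncurry_doubleCentering μ₁ μ₂ hφ
  have hmoment : ∫ p, (((N : ℝ) ^ 2)⁻¹ * ∑ i, ∑ j, ψ (p.1 i) (p.2 j)) ^ 2
      ∂(Measure.pi fun _ : Fin N => μ₁).prod (Measure.pi fun _ : Fin N => μ₂) ≤ (4 * M / N) ^ 2 :=
    calc _ = (((N : ℝ) ^ 2)⁻¹) ^ 2 * ∫ p, (∑ i, ∑ j, ψ (p.1 i) (p.2 j)) ^ 2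
          ∂(Measure.pi fun _ : Fin N => μ₁).prod (Measure.pi fun _ : Fin N => μ₂) := by
          simp_rw [mul_pow]
          exact integral_const_mul _ _
      _ ≤ (((N : ℝ) ^ 2)⁻¹) ^ 2 * (Fintype.card (Fin N) * Fintype.card (Fin N) * (4 * M) ^ 2) := by
          gcongr
          exact integral_sq_sum_le_of_degenerate hψm (abs_doubleCentering_le μ₁ μ₂ hM)
            (integral_doubleCentering_left μ₁ μ₂ hφ hM)
            (integral_doubleCentering_right μ₁ μ₂ hφ hM)
      _ = (4 * M / N) ^ 2 := by
          rw [Fintype.card_fin]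
          field_simp
  rw [← hlaw, integral_map (by fun_prop) (Measurable.aestronglyMeasurable (by fun_prop))]
    at hmoment
  simp_rw [empirical_product_error_eq_mean_doubleCentering μ₁ μ₂ φ hN.ne', ← Real.sqrt_eq_rpow]
  exact (Real.sqrt_le_left (by positivity)).mpr hmoment

/-- Product `L²` inequality for empirical measures: if `X₁` are `N` i.i.d. draws from `μ₁` and
`X₂` are `N` i.i.d. draws from `μ₂`, the two collections being independent, then
`E[((μ₁^N − μ₁) × (μ₂^N − μ₂)(φ))²]^{1/2} ≤ C‖φ‖/N` for a constant `C` independent of `N`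
and `φ`. -/
theorem stmt8
    {Ω : Type*} [MeasurableSpace Ω] (P : Measure Ω) [IsProbabilityMeasure P]
    {S₁ S₂ : Type*} [MeasurableSpace S₁] [MeasurableSpace S₂]
    (μ₁ : Measure S₁) (μ₂ : Measure S₂)
    [IsProbabilityMeasure μ₁] [IsProbabilityMeasure μ₂] :
    ∃ C : ℝ, ∀ N : ℕ, 0 < N →
      ∀ (X₁ : Fin N → Ω → S₁) (X₂ : Fin N → Ω → S₂),
      (∀ n, Measurable (X₁ n)) → (∀ n, Measurable (X₂ n)) →
      Measure.map (fun ω => ((fun n => X₁ n ω), (fun n => X₂ n ω))) P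
        = (Measure.pi fun _ : Fin N => μ₁).prod (Measure.pi fun _ : Fin N => μ₂) →
      ∀ φ : S₁ × S₂ → ℝ, Measurable φ → ∀ M : ℝ, (∀ x, |φ x| ≤ M) →
      (∫ ω, (((N : ℝ)^2)⁻¹ * (∑ i : Fin N, ∑ j : Fin N, φ (X₁ i ω, X₂ j ω))
          - (N : ℝ)⁻¹ * (∑ i : Fin N, ∫ y, φ (X₁ i ω, y) ∂μ₂)
          - (N : ℝ)⁻¹ * (∑ j : Fin N, ∫ x, φ (x, X₂ j ω) ∂μ₁)
          + ∫ x, ∫ y, φ (x, y) ∂μ₂ ∂μ₁) ^ 2 ∂P) ^ ((1 : ℝ) / 2)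
        ≤ C * M / N :=
  stmt8_general P μ₁ μ₂
end

section
/- Let γ be a probability measure on (E,ℰ), w a bounded, everywhere-positive measurable function with γ(w) > 0, ρ the measure ρ(dx) = w(x)γ(dx) with mass Z = γ(w) and normalization μ = ρ/Z. Let X¹,…,X^N be i.i.d. draws from γ and set Z^N := N^{-1} ∑_n w(Xⁿ) and μ^N(φ) := ∑_n w(Xⁿ)φ(Xⁿ) / ∑_n w(Xⁿ). If additionally w ≥ β for some β > 0, then there exists C < ∞ such that |E[μ^N(φ)] − μ(φ)| ≤ C‖φ‖/N for all N > 0 and all bounded measurable φ. -/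
/-!
Write `S = ∑ₙ w(Xⁿ)`, `A = ∑ₙ w(Xⁿ) φ(Xⁿ)`, `m = E S = N Z` and `μ = E A / m = μ(φ)`.
Expanding `1 / S` to second order around `1 / m` gives the exact identity
`A/S - μ = (A - μS)/m - (A - μS)(S - m)/m² + (A/S - μ)(S - m)²/m²`.
The first term has mean zero, the second has mean `-(Cov(A, S) - μ Var S)/m²`, and the third is
at most `2‖φ‖(S - m)²/m²` because `|A/S| ≤ ‖φ‖`. For i.i.d. draws, `Cov(A, S)` and `Var S` are
`N` times the corresponding moments of a single draw, while `m² = N²Z²`; so the bias is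
`O(‖φ‖/N)`.
-/

open MeasureTheory ProbabilityTheory

lemma div_sub_eq_second_order {a s a₀ m μ : ℝ} (hs : s ≠ 0) (hm : m ≠ 0) (hμ : a₀ = μ * m) :
    a / s - μ = (a - μ * s) / m - ((a - a₀) * (s - m) - μ * (s - m) ^ 2) / m ^ 2
      + (a / s - μ) * (s - m) ^ 2 / m ^ 2 := by
  subst hμ
  field_simp
  ring

section Moments

variable {Ω : Type*} [MeasurableSpace Ω] {P : Measure Ω} {X Y : Ω → ℝ}

lemma integral_pos_of_forall_pos_s17 [NeZero P] (hX : Integrable X P) (hXpos : ∀ ω, 0 < X ω) :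
    0 < ∫ ω, X ω ∂P := by
  have hsupp : Function.support X = Set.univ := Set.eq_univ_of_forall fun ω ↦ (hXpos ω).ne'
  rw [integral_pos_iff_support_of_nonneg (fun ω ↦ (hXpos ω).le) hX, hsupp]
  simp [NeZero.ne P]

lemma covariance_sq_le_variance_mul_variance [IsFiniteMeasure P] (hX : MemLp X 2 P)
    (hY : MemLp Y 2 P) : cov[X, Y; P] ^ 2 ≤ Var[X; P] * Var[Y; P] := by
  have hquad (t : ℝ) : 0 ≤ Var[Y; P] * (t * t) + 2 * cov[X, Y; P] * t + Var[X; P] := by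
    have h := variance_nonneg (X + t • Y) P
    rw [variance_add hX (hY.const_smul t), variance_smul, covariance_smul_right] at h
    linarith
  have h := discrim_le_zero hquad
  rw [discrim] at h
  linarith

variable [IsProbabilityMeasure P]

lemma variance_le_sq_of_abs_le {a : ℝ} (hX : AEMeasurable X P) (hXa : ∀ ω, |X ω| ≤ a) :
    Var[X; P] ≤ a ^ 2 := by
  have h := variance_le_sq_of_bounded (a := -a) (b := a) (ae_of_all _ fun ω ↦ abs_le.mp (hXa ω)) hX
  rwa [show (a - -a) / 2 = a by ring] at h

lemma abs_covariance_le_of_abs_le {a b : ℝ} (hX : AEStronglyMeasurable X P)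
    (hY : AEStronglyMeasurable Y P) (hXa : ∀ ω, |X ω| ≤ a) (hYb : ∀ ω, |Y ω| ≤ b) :
    |cov[X, Y; P]| ≤ a * b := by
  obtain ⟨ω⟩ : Nonempty Ω := nonempty_of_isProbabilityMeasure P
  refine abs_le_of_sq_le_sq ?_ (mul_nonneg ((abs_nonneg _).trans (hXa ω))
    ((abs_nonneg _).trans (hYb ω)))
  calc cov[X, Y; P] ^ 2 ≤ Var[X; P] * Var[Y; P] :=
        covariance_sq_le_variance_mul_variance (.of_bound hX a (ae_of_all _ hXa))
          (.of_bound hY b (ae_of_all _ hYb))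
    _ ≤ a ^ 2 * b ^ 2 := mul_le_mul (variance_le_sq_of_abs_le hX.aemeasurable hXa)
        (variance_le_sq_of_abs_le hY.aemeasurable hYb) (variance_nonneg _ _) (sq_nonneg _)
    _ = (a * b) ^ 2 := (mul_pow a b 2).symm

end Moments

section Ratio

variable {Ω : Type*} [MeasurableSpace Ω] {P : Measure Ω} [IsProbabilityMeasure P] {A S : Ω → ℝ}

theorem integral_div_sub_div_integral_eq (hA : MemLp A 2 P) (hS : MemLp S 2 P)
    (hSpos : ∀ ω, 0 < S ω) (hdiv : Integrable (fun ω ↦ A ω / S ω) P)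
    (hrem : Integrable (fun ω ↦
      (A ω / S ω - (∫ ω, A ω ∂P) / ∫ ω, S ω ∂P) * (S ω - ∫ ω, S ω ∂P) ^ 2) P) :
    ∫ ω, A ω / S ω ∂P - (∫ ω, A ω ∂P) / ∫ ω, S ω ∂P
      = (∫ ω, (A ω / S ω - (∫ ω, A ω ∂P) / ∫ ω, S ω ∂P) * (S ω - ∫ ω, S ω ∂P) ^ 2 ∂P
          - (cov[A, S; P] - (∫ ω, A ω ∂P) / (∫ ω, S ω ∂P) * Var[S; P])) / (∫ ω, S ω ∂P) ^ 2 := by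
  set a₀ := ∫ ω, A ω ∂P
  set m := ∫ ω, S ω ∂P
  set μ := a₀ / m
  have hm : 0 < m := integral_pos_of_forall_pos_s17 (hS.integrable one_le_two) hSpos
  have hAint : Integrable A P := hA.integrable one_le_two
  have hSint : Integrable S P := hS.integrable one_le_two
  have hU : Integrable (fun ω ↦ (S ω - m) ^ 2) P := (hS.sub (memLp_const m)).integrable_sq
  have hcross : Integrable (fun ω ↦ (A ω - a₀) * (S ω - m)) P :=
    (hA.sub (memLp_const a₀)).integrable_mul (hS.sub (memLp_const m))
  have h₁ : Integrable (fun ω ↦ (A ω - μ * S ω) / m) P :=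
    (hAint.sub (hSint.const_mul μ)).div_const m
  have h₂ : Integrable (fun ω ↦ ((A ω - a₀) * (S ω - m) - μ * (S ω - m) ^ 2) / m ^ 2) P :=
    (hcross.sub (hU.const_mul μ)).div_const _
  have hfirst : ∫ ω, (A ω - μ * S ω) / m ∂P = 0 := by
    rw [integral_div, integral_sub hAint (hSint.const_mul μ), integral_const_mul,
      div_mul_cancel₀ a₀ hm.ne', sub_self, zero_div]
  have hsecond : ∫ ω, ((A ω - a₀) * (S ω - m) - μ * (S ω - m) ^ 2) / m ^ 2 ∂P
      = (cov[A, S; P] - μ * Var[S; P]) / m ^ 2 := by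
    rw [integral_div, integral_sub hcross (hU.const_mul μ), integral_const_mul,
      variance_eq_integral hS.aemeasurable]
    rfl
  calc ∫ ω, A ω / S ω ∂P - μ = ∫ ω, (A ω / S ω - μ) ∂P := by
        rw [integral_sub hdiv (integrable_const μ)]; simp
    _ = ∫ ω, ((A ω - μ * S ω) / m - ((A ω - a₀) * (S ω - m) - μ * (S ω - m) ^ 2) / m ^ 2
          + (A ω / S ω - μ) * (S ω - m) ^ 2 / m ^ 2) ∂P :=
        integral_congr_ae (ae_of_all _ fun ω ↦
          div_sub_eq_second_order (hSpos ω).ne' hm.ne' (div_mul_cancel₀ _ hm.ne').symm)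
    _ = _ := by
        rw [integral_add, integral_sub h₁ h₂, hfirst, hsecond, integral_div]
        · ring
        exacts [h₁.sub h₂, hrem.div_const _]

theorem abs_integral_div_sub_div_integral_le {M : ℝ} (hA : AEStronglyMeasurable A P)
    (hS : MemLp S 2 P) (hSpos : ∀ ω, 0 < S ω) (hAS : ∀ ω, |A ω| ≤ M * S ω) :
    |∫ ω, A ω / S ω ∂P - (∫ ω, A ω ∂P) / ∫ ω, S ω ∂P|
      ≤ (|cov[A, S; P]| + 3 * M * Var[S; P]) / (∫ ω, S ω ∂P) ^ 2 := by
  set μ := (∫ ω, A ω ∂P) / ∫ ω, S ω ∂P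
  have hm : 0 < ∫ ω, S ω ∂P := integral_pos_of_forall_pos_s17 (hS.integrable one_le_two) hSpos
  have hA2 : MemLp A 2 P := (hS.const_mul M).of_le hA <| ae_of_all _ fun ω ↦ by
    simpa [Real.norm_eq_abs] using (hAS ω).trans (le_abs_self _)
  have hdivM (ω : Ω) : |A ω / S ω| ≤ M := by
    rw [abs_div, abs_of_pos (hSpos ω), div_le_iff₀ (hSpos ω)]; exact hAS ω
  have hμ : |μ| ≤ M := by
    rw [abs_div, abs_of_pos hm, div_le_iff₀ hm, ← integral_const_mul]
    exact abs_integral_le_integral_abs.trans <| integral_mono (hA2.integrable one_le_two).abs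
      ((hS.integrable one_le_two).const_mul M) hAS
  have hratio (ω : Ω) : |A ω / S ω - μ| ≤ 2 * M := by
    linarith [abs_sub (A ω / S ω) μ, hdivM ω]
  have hdiv_meas : AEStronglyMeasurable (fun ω ↦ A ω / S ω) P :=
    (hA.aemeasurable.div hS.1.aemeasurable).aestronglyMeasurable
  have hU : Integrable (fun ω ↦ (S ω - ∫ ω, S ω ∂P) ^ 2) P :=
    (hS.sub (memLp_const _)).integrable_sq
  have hrem : Integrable (fun ω ↦ (A ω / S ω - μ) * (S ω - ∫ ω, S ω ∂P) ^ 2) P :=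
    hU.bdd_mul (hdiv_meas.sub aestronglyMeasurable_const) (ae_of_all _ hratio)
  have hremM : |∫ ω, (A ω / S ω - μ) * (S ω - ∫ ω, S ω ∂P) ^ 2 ∂P| ≤ 2 * M * Var[S; P] := by
    rw [variance_eq_integral hS.aemeasurable, ← integral_const_mul]
    refine abs_integral_le_integral_abs.trans (integral_mono hrem.abs (hU.const_mul _) fun ω ↦ ?_)
    rw [abs_mul, abs_of_nonneg (sq_nonneg (S ω - ∫ ω, S ω ∂P))]
    exact mul_le_mul_of_nonneg_right (hratio ω) (sq_nonneg _)
  rw [integral_div_sub_div_integral_eq hA2 hS hSpos (.of_bound hdiv_meas M (ae_of_all _ hdivM))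
    hrem, abs_div, abs_of_pos (pow_pos hm 2)]
  gcongr
  have hμVar : |μ * Var[S; P]| ≤ M * Var[S; P] := by
    rw [abs_mul, abs_of_nonneg (variance_nonneg _ _)]
    exact mul_le_mul_of_nonneg_right hμ (variance_nonneg _ _)
  linarith [abs_sub (∫ ω, (A ω / S ω - μ) * (S ω - ∫ ω, S ω ∂P) ^ 2 ∂P)
    (cov[A, S; P] - μ * Var[S; P]), abs_sub (cov[A, S; P]) (μ * Var[S; P])]

end Ratio

section IID

variable {ι E : Type*} [Fintype ι] [MeasurableSpace E] {γ : Measure E} [IsProbabilityMeasure γ]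

lemma integral_comp_eval_pi {f : E → ℝ} (hf : AEStronglyMeasurable f γ) (i : ι) :
    ∫ x : ι → E, f (x i) ∂(Measure.pi fun _ ↦ γ) = ∫ y, f y ∂γ := by
  have hev := measurePreserving_eval (fun _ : ι ↦ γ) i
  rw [← integral_map hev.measurable.aemeasurable (by rwa [hev.map_eq]), hev.map_eq]

lemma integral_sum_comp_eval_pi {f : E → ℝ} (hf : Integrable f γ) :
    ∫ x : ι → E, ∑ i, f (x i) ∂(Measure.pi fun _ ↦ γ) = Fintype.card ι * ∫ y, f y ∂γ := by
  refine (integral_finsetSum _ fun i _ ↦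
    (measurePreserving_eval _ i).integrable_comp_of_integrable hf).trans ?_
  simp [integral_comp_eval_pi hf.aestronglyMeasurable]

lemma covariance_sum_comp_eval_pi {f g : E → ℝ} (hf : MemLp f 2 γ) (hg : MemLp g 2 γ) :
    cov[fun x : ι → E ↦ ∑ i, f (x i), fun x ↦ ∑ i, g (x i); Measure.pi fun _ ↦ γ]
      = Fintype.card ι * cov[f, g; γ] := by
  have hev (i : ι) := measurePreserving_eval (fun _ : ι ↦ γ) i
  refine (covariance_fun_sum_fun_sum (X := fun i (x : ι → E) ↦ f (x i))
    (Y := fun i (x : ι → E) ↦ g (x i)) (fun i ↦ hf.comp_measurePreserving (hev i))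
    (fun i ↦ hg.comp_measurePreserving (hev i))).trans ?_
  have hmap (i : ι) : (Measure.pi fun _ ↦ γ).map (fun x : ι → E ↦ id (x i)) = γ := (hev i).map_eq
  have hoff {i j : ι} (hij : i ≠ j) :
      cov[fun x ↦ f (x i), fun x ↦ g (x j); Measure.pi fun _ ↦ γ] = 0 := by
    refine IndepFun.covariance_eq_zero ?_ (hf.comp_measurePreserving (hev i))
      (hg.comp_measurePreserving (hev j))
    exact ((iIndepFun_pi (X := fun _ ↦ id) fun _ ↦ aemeasurable_id).indepFun hij).comp₀
      (hev i).measurable.aemeasurable (hev j).measurable.aemeasurable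
      (by rw [hmap]; exact hf.1.aemeasurable)
      (by rw [hmap]; exact hg.1.aemeasurable)
  have hdiag (i : ι) :
      cov[fun x ↦ f (x i), fun x ↦ g (x i); Measure.pi fun _ ↦ γ] = cov[f, g; γ] := by
    have h := covariance_map (X := f) (Y := g) (by rw [(hev i).map_eq]; exact hf.1)
      (by rw [(hev i).map_eq]; exact hg.1) (hev i).measurable.aemeasurable
    rw [(hev i).map_eq] at h
    exact h.symm
  simp [Finset.sum_eq_single_of_mem _ (Finset.mem_univ _) fun j _ hji ↦ hoff hji.symm, hdiag]

theorem abs_integral_sum_mul_div_sum_pi_sub_le [Nonempty ι] {w φ : E → ℝ} {Mw M : ℝ}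
    (hw : AEStronglyMeasurable w γ) (hφ : AEStronglyMeasurable φ γ) (hwpos : ∀ y, 0 < w y)
    (hwM : ∀ y, w y ≤ Mw) (hφM : ∀ y, |φ y| ≤ M) :
    |∫ x : ι → E, (∑ i, w (x i) * φ (x i)) / ∑ i, w (x i) ∂(Measure.pi fun _ ↦ γ)
        - (∫ y, w y * φ y ∂γ) / ∫ y, w y ∂γ|
      ≤ 4 * Mw ^ 2 / (∫ y, w y ∂γ) ^ 2 * M / Fintype.card ι := by
  obtain ⟨y₀⟩ : Nonempty E := nonempty_of_isProbabilityMeasure γ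
  have hM : 0 ≤ M := (abs_nonneg _).trans (hφM y₀)
  have hwabs (y : E) : |w y| ≤ Mw := (abs_of_pos (hwpos y)).trans_le (hwM y)
  have hwφ (y : E) : |w y * φ y| ≤ Mw * M := by
    rw [abs_mul]
    exact mul_le_mul (hwabs y) (hφM y) (abs_nonneg _) ((abs_nonneg _).trans (hwabs y₀))
  have hw2 : MemLp w 2 γ := .of_bound hw Mw (ae_of_all _ hwabs)
  have hwφ2 : MemLp (fun y ↦ w y * φ y) 2 γ := .of_bound (hw.mul hφ) (Mw * M) (ae_of_all _ hwφ)
  have hZ : 0 < ∫ y, w y ∂γ := integral_pos_of_forall_pos_s17 (hw2.integrable one_le_two) hwpos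
  have hev (i : ι) := measurePreserving_eval (fun _ : ι ↦ γ) i
  have hS : MemLp (fun x : ι → E ↦ ∑ i, w (x i)) 2 (Measure.pi fun _ ↦ γ) :=
    memLp_finsetSum _ fun i _ ↦ hw2.comp_measurePreserving (hev i)
  have hA : MemLp (fun x : ι → E ↦ ∑ i, w (x i) * φ (x i)) 2 (Measure.pi fun _ ↦ γ) :=
    memLp_finsetSum _ fun i _ ↦ hwφ2.comp_measurePreserving (hev i)
  have hAS (x : ι → E) : |∑ i, w (x i) * φ (x i)| ≤ M * ∑ i, w (x i) := by
    rw [Finset.mul_sum]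
    refine (Finset.abs_sum_le_sum_abs _ _).trans (Finset.sum_le_sum fun i _ ↦ ?_)
    rw [abs_mul, abs_of_pos (hwpos _), mul_comm]
    exact mul_le_mul_of_nonneg_right (hφM _) (hwpos _).le
  have h := abs_integral_div_sub_div_integral_le hA.1 hS
    (fun x ↦ Finset.sum_pos (fun i _ ↦ hwpos (x i)) Finset.univ_nonempty) hAS
  rw [integral_sum_comp_eval_pi (hwφ2.integrable one_le_two),
    integral_sum_comp_eval_pi (hw2.integrable one_le_two), covariance_sum_comp_eval_pi hwφ2 hw2,
    ← covariance_self hS.aemeasurable, covariance_sum_comp_eval_pi hw2 hw2,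
    covariance_self hw.aemeasurable, mul_div_mul_left _ _ (by positivity)] at h
  have hcov : |cov[fun y ↦ w y * φ y, w; γ]| ≤ Mw * M * Mw :=
    abs_covariance_le_of_abs_le hwφ2.1 hw hwφ hwabs
  have hvar : Var[w; γ] ≤ Mw ^ 2 := variance_le_sq_of_abs_le hw.aemeasurable hwabs
  have hn : (0 : ℝ) < Fintype.card ι := by positivity
  refine h.trans ?_
  calc _ ≤ (Fintype.card ι * (Mw * M * Mw) + 3 * M * (Fintype.card ι * Mw ^ 2))
          / (Fintype.card ι * ∫ y, w y ∂γ) ^ 2 := by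
        rw [abs_mul, abs_of_pos hn]
        gcongr
    _ = 4 * Mw ^ 2 / (∫ y, w y ∂γ) ^ 2 * M / Fintype.card ι := by
        field_simp
        ring

end IID

theorem stmt17_general
    {Ω E : Type*} [MeasurableSpace Ω] [MeasurableSpace E]
    (P : Measure Ω)
    (γ : Measure E) [IsProbabilityMeasure γ]
    (w : E → ℝ) (hwmeas : Measurable w)
    (Mw β : ℝ) (hβ : 0 < β) (hwl : ∀ x, β ≤ w x) (hwu : ∀ x, w x ≤ Mw)
    (X : (N : ℕ) → Fin N → Ω → E)
    (hlaw : ∀ N : ℕ, Measure.map (fun ω (n : Fin N) => X N n ω) P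
      = Measure.pi (fun _ : Fin N => γ)) :
    ∃ C : ℝ, ∀ N : ℕ, 0 < N → ∀ φ : E → ℝ, Measurable φ → ∀ M : ℝ, (∀ x, |φ x| ≤ M) →
      |(∫ ω, (∑ n : Fin N, w (X N n ω) * φ (X N n ω)) / (∑ n : Fin N, w (X N n ω)) ∂P)
          - (∫ x, w x * φ x ∂γ) / (∫ x, w x ∂γ)| ≤ C * M / N := by
  refine ⟨4 * Mw ^ 2 / (∫ x, w x ∂γ) ^ 2, fun N hN φ hφ M hM ↦ ?_⟩
  have : Nonempty (Fin N) := ⟨⟨0, hN⟩⟩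
  have hX : AEMeasurable (fun ω (n : Fin N) ↦ X N n ω) P :=
    .of_map_ne_zero (by rw [hlaw N]; exact NeZero.ne _)
  have hG : Measurable fun x : Fin N → E ↦ (∑ n, w (x n) * φ (x n)) / ∑ n, w (x n) := by
    fun_prop
  rw [← integral_map (f := fun x : Fin N → E ↦ (∑ n, w (x n) * φ (x n)) / ∑ n, w (x n)) hX
    hG.aestronglyMeasurable, hlaw N]
  simpa only [Fintype.card_fin] using abs_integral_sum_mul_div_sum_pi_sub_le (ι := Fin N)
    (γ := γ) hwmeas.aestronglyMeasurable hφ.aestronglyMeasurable (fun x ↦ hβ.trans_le (hwl x))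
    hwu hM

/-- Self-normalized importance sampling bias bound: with i.i.d. draws from `γ` and a bounded
measurable weight `w ≥ β > 0`, the self-normalized estimator
`μ^N(φ) = ∑ w(Xⁿ)φ(Xⁿ) / ∑ w(Xⁿ)` of `μ(φ) = γ(wφ)/γ(w)` has bias at most `C‖φ‖/N`. -/
theorem stmt17
    {Ω E : Type*} [MeasurableSpace Ω] [MeasurableSpace E]
    (P : Measure Ω) [IsProbabilityMeasure P]
    (γ : Measure E) [IsProbabilityMeasure γ]
    (w : E → ℝ) (hwmeas : Measurable w)
    (Mw β : ℝ) (hβ : 0 < β) (hwl : ∀ x, β ≤ w x) (hwu : ∀ x, w x ≤ Mw)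
    (X : (N : ℕ) → Fin N → Ω → E)
    (hXmeas : ∀ N n, Measurable (X N n))
    (hlaw : ∀ N : ℕ, Measure.map (fun ω (n : Fin N) => X N n ω) P
      = Measure.pi (fun _ : Fin N => γ)) :
    ∃ C : ℝ, ∀ N : ℕ, 0 < N → ∀ φ : E → ℝ, Measurable φ → ∀ M : ℝ, (∀ x, |φ x| ≤ M) →
      |(∫ ω, (∑ n : Fin N, w (X N n ω) * φ (X N n ω)) / (∑ n : Fin N, w (X N n ω)) ∂P)
          - (∫ x, w x * φ x ∂γ) / (∫ x, w x ∂γ)| ≤ C * M / N :=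
  stmt17_general P γ w hwmeas Mw β hβ hwl hwu X hlaw
end
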